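/- arXiv:1711.09544 — 3 statements merged into one kernel-verified Lean document; each statement's English description precedes it below -/
import Mathlib

section
/- The Möbius deformation of Young's lattice is a dual filtered graph satisfying [D̂, Ũ] = 1 + D̂: let β = −1, so that ũ_i = u_i + u_i d_i, let Ũ := Σ_{i ≥ 1} ũ_i (concretely Ũ·λ = Σ_{λ+□}(λ+□) + i(λ)·λ), and let D̂ be the operator defined on basis elements by D̂·λ := Σ_μ μ, the sum over all partitions μ ⊊ λ such that λ/μ is a (nonempty) rook strip. Then D̂Ũ − ŨD̂ = 1 + D̂ as operators on P. Moreover, D̂ is obtained from the down operator D̄ of the Cauchy deformation with κ = β = −1 (D̄·λ = Σ_{μ ⊊ λ} (−1)^{c(λ/μ)}(−1)^{|λ/μ|−c(λ/μ)} μ) via the transform D̂ = −D̄(1 + D̄)^{-1}. -/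
open scoped Classical

noncomputable section

/-- The Schur "up" operator `u_{j+1}` (columns indexed from 0): on a basis partition `μ`,
it adds a box at the bottom of column `j` if the result is a Young diagram, else gives `0`. -/
def schurU (R : Type*) [CommRing R] (j : ℕ) :
    Module.End R (YoungDiagram →₀ R) :=
  Finsupp.lift (YoungDiagram →₀ R) R YoungDiagram fun μ =>
    if h : ∃ lam : YoungDiagram, lam.cells = insert (μ.colLen j, j) μ.cells
    then Finsupp.single h.choose 1 else 0

/-- The Schur "down" operator `d_{j+1}`: on a basis partition `λ`, it removes the bottom box
of column `j` if the result is a Young diagram, else gives `0`. -/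
def schurD (R : Type*) [CommRing R] (j : ℕ) :
    Module.End R (YoungDiagram →₀ R) :=
  Finsupp.lift (YoungDiagram →₀ R) R YoungDiagram fun lam =>
    if h : ∃ μ : YoungDiagram, lam.cells = insert (μ.colLen j, j) μ.cells
    then Finsupp.single h.choose 1 else 0

/-- The deformed operator `ũ_{j+1} = u_{j+1} - β u_{j+1} d_{j+1}`. -/
def utilde (R : Type*) [CommRing R] (β : R) (j : ℕ) :
    Module.End R (YoungDiagram →₀ R) :=
  schurU R j - β • (schurU R j * schurD R j)

/-- The deformed operator `d̃_{j+1} = d_{j+1} + β d_{j+1}² + β² d_{j+1}³ + ⋯`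
(a finite sum on each basis element). -/
def dtilde (R : Type*) [CommRing R] (β : R) (j : ℕ) :
    Module.End R (YoungDiagram →₀ R) :=
  Finsupp.lift (YoungDiagram →₀ R) R YoungDiagram fun lam =>
    ∑ l ∈ Finset.range (lam.colLen j), β ^ l • ((schurD R j) ^ (l + 1)) (Finsupp.single lam 1)


/-- The cells of the skew shape `λ/μ`. -/
def skewCells (μ lam : YoungDiagram) : Finset (ℕ × ℕ) := lam.cells \ μ.cells

/-- `|λ/μ|`, the number of boxes of the skew shape `λ/μ`. -/
def skewSize (μ lam : YoungDiagram) : ℕ := (skewCells μ lam).card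

/-- `c(λ/μ)`, the number of columns containing a box of `λ/μ`. -/
def skewCols (μ lam : YoungDiagram) : ℕ := ((skewCells μ lam).image Prod.snd).card

/-- `r(λ/μ)`, the number of rows containing a box of `λ/μ`. -/
def skewRows (μ lam : YoungDiagram) : ℕ := ((skewCells μ lam).image Prod.fst).card

/-- `λ/μ` is a horizontal strip: `μ ⊆ λ` and no two boxes of `λ/μ` lie in the same column. -/
def IsHorizontalStrip (μ lam : YoungDiagram) : Prop :=
  μ ≤ lam ∧ ∀ c ∈ skewCells μ lam, ∀ c' ∈ skewCells μ lam, c.2 = c'.2 → c = c'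

/-- `λ/μ` is a vertical strip: `μ ⊆ λ` and no two boxes of `λ/μ` lie in the same row. -/
def IsVerticalStrip (μ lam : YoungDiagram) : Prop :=
  μ ≤ lam ∧ ∀ c ∈ skewCells μ lam, ∀ c' ∈ skewCells μ lam, c.1 = c'.1 → c = c'

/-- `λ/μ` is a rook strip: `μ ⊆ λ` and no two boxes of `λ/μ` share a row or a column. -/
def IsRookStrip (μ lam : YoungDiagram) : Prop :=
  μ ≤ lam ∧ ∀ c ∈ skewCells μ lam, ∀ c' ∈ skewCells μ lam, (c.1 = c'.1 ∨ c.2 = c'.2) → c = c'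

/-- `I(μ)`: the set of removable boxes (inner corners) of `μ`. -/
def corners (μ : YoungDiagram) : Finset (ℕ × ℕ) :=
  μ.cells.filter fun c => (c.1 + 1, c.2) ∉ μ.cells ∧ (c.1, c.2 + 1) ∉ μ.cells

/-- `i(μ)`, the number of removable boxes (inner corners) of `μ`. -/
def numCorners (μ : YoungDiagram) : ℕ := (corners μ).card

/-- The cells of the augmented shape `λ//μ = λ/μ ∪ I(μ)`. -/
def dShape (μ lam : YoungDiagram) : Finset (ℕ × ℕ) := skewCells μ lam ∪ corners μ

/-- `a(λ//μ)`: the number of columns of `λ//μ` that are not columns of `λ/μ`, i.e. the number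
of "open" removable boxes of `μ` sharing no column with a box of `λ/μ`. -/
def openCount (μ lam : YoungDiagram) : ℕ :=
  ((corners μ).filter fun c => ∀ c' ∈ skewCells μ lam, c'.2 ≠ c.2).card

/-- The finite set of all Young diagrams contained in `λ`. -/
def subDiagrams (lam : YoungDiagram) : Finset YoungDiagram :=
  ((lam.cells.powerset.filter fun s : Finset (ℕ × ℕ) =>
      IsLowerSet (↑s : Set (ℕ × ℕ))).attach).image
    fun s => YoungDiagram.mk s.1 (by
      have h := s.2
      rw [Finset.mem_filter] at h
      exact h.2)

/-- The up operator `Ũ = ũ_1 + ũ_2 + ⋯` of the `β`-filtered Young graph (a finite sum on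
every basis element). -/
def bigU (R : Type*) [CommRing R] (β : R) : Module.End R (YoungDiagram →₀ R) :=
  Finsupp.lift (YoungDiagram →₀ R) R YoungDiagram fun μ =>
    ∑ j ∈ Finset.range (μ.rowLen 0 + 1), utilde R β j (Finsupp.single μ 1)

/-- The down operator `D̃ = d̃_1 + d̃_2 + ⋯` of the `β`-filtered Young graph (a finite sum on
every basis element). -/
def bigD (R : Type*) [CommRing R] (β : R) : Module.End R (YoungDiagram →₀ R) :=
  Finsupp.lift (YoungDiagram →₀ R) R YoungDiagram fun lam =>
    ∑ j ∈ Finset.range (lam.rowLen 0 + 1), dtilde R β j (Finsupp.single lam 1)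

/-- The down operator `D̄` of the Cauchy filtration `κ𝕐` of Young's lattice:
`D̄·λ = Σ_{μ ⊊ λ} κ^{c(λ/μ)} β^{|λ/μ| - c(λ/μ)} μ`. -/
def bigDbar (R : Type*) [CommRing R] (β κ : R) : Module.End R (YoungDiagram →₀ R) :=
  Finsupp.lift (YoungDiagram →₀ R) R YoungDiagram fun lam =>
    ∑ μ ∈ (subDiagrams lam).erase lam,
      (κ ^ skewCols μ lam * β ^ (skewSize μ lam - skewCols μ lam)) • Finsupp.single μ 1

/-- The down operator `D̂` of the Möbius deformation `μ𝕐` of Young's lattice: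
`D̂·λ = Σ μ`, summed over all `μ ⊊ λ` such that `λ/μ` is a (nonempty) rook strip. -/
def hatD (R : Type*) [CommRing R] : Module.End R (YoungDiagram →₀ R) :=
  Finsupp.lift (YoungDiagram →₀ R) R YoungDiagram fun lam =>
    ∑ μ ∈ ((subDiagrams lam).erase lam).filter (fun μ => IsRookStrip μ lam),
      Finsupp.single μ 1

section Foundations

open Finset YoungDiagram

variable {μ ν lam : YoungDiagram}

lemma colLen_mono (h : μ ≤ ν) (j : ℕ) : μ.colLen j ≤ ν.colLen j := by
  by_contra hc
  push_neg at hc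
  have h1 : (ν.colLen j, j) ∈ μ := by
    rw [YoungDiagram.mem_iff_lt_colLen]; exact hc
  have h2 := h h1
  rw [YoungDiagram.mem_iff_lt_colLen] at h2
  omega

lemma mem_subDiagrams : μ ∈ subDiagrams lam ↔ μ ≤ lam := by
  constructor
  · rintro h
    simp only [subDiagrams, Finset.mem_image] at h
    obtain ⟨s, _, rfl⟩ := h
    have hs := s.2
    rw [Finset.mem_filter, Finset.mem_powerset] at hs
    intro c hc
    exact hs.1 hc
  · intro h
    simp only [subDiagrams, Finset.mem_image]
    have hmem : μ.cells ∈ lam.cells.powerset.filter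
        (fun s : Finset (ℕ × ℕ) => IsLowerSet (↑s : Set (ℕ × ℕ))) := by
      rw [Finset.mem_filter, Finset.mem_powerset]
      exact ⟨fun c hc => h hc, μ.isLowerSet⟩
    exact ⟨⟨μ.cells, hmem⟩, Finset.mem_attach _ _, by ext c; simp⟩

/-- addability of a cell at the bottom of column `j`. -/
def addOK (μ : YoungDiagram) (j : ℕ) : Prop :=
  ∃ lam : YoungDiagram, lam.cells = insert (μ.colLen j, j) μ.cells

/-- removability of the bottom cell of column `j`. -/
def remOK (lam : YoungDiagram) (j : ℕ) : Prop :=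
  ∃ μ : YoungDiagram, lam.cells = insert (μ.colLen j, j) μ.cells

/-- diagram obtained by adding a cell at the bottom of column `j` (junk value `μ` if not addable) -/
noncomputable def growD (μ : YoungDiagram) (j : ℕ) : YoungDiagram :=
  if h : addOK μ j then h.choose else μ

/-- diagram obtained by removing the bottom cell of column `j` (junk value if not removable) -/
noncomputable def shrinkD (lam : YoungDiagram) (j : ℕ) : YoungDiagram :=
  if h : remOK lam j then h.choose else lam

lemma growD_cells (h : addOK μ j) :
    (growD μ j).cells = insert (μ.colLen j, j) μ.cells := by
  rw [growD, dif_pos h]; exact h.choose_spec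

lemma addOK_iff {j : ℕ} : addOK μ j ↔ (j = 0 ∨ μ.colLen j < μ.colLen (j - 1)) := by
  constructor
  · rintro ⟨lam, hlam⟩
    by_cases hj : j = 0
    · exact Or.inl hj
    · right
      have h1 : (μ.colLen j, j) ∈ lam := by
        rw [← YoungDiagram.mem_cells, hlam]; exact Finset.mem_insert_self _ _
      have h2 : (μ.colLen j, j - 1) ∈ lam := by
        apply lam.up_left_mem le_rfl (Nat.sub_le j 1) h1
      rw [← YoungDiagram.mem_cells, hlam, Finset.mem_insert] at h2
      rcases h2 with h2 | h2
      · exfalso; have := congrArg Prod.snd h2; simp at this; omega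
      · rw [YoungDiagram.mem_cells, YoungDiagram.mem_iff_lt_colLen] at h2
        exact h2
  · intro h
    have hlower : IsLowerSet (↑(insert (μ.colLen j, j) μ.cells) : Set (ℕ × ℕ)) := by
      intro x y hyx hx
      simp only [Finset.coe_insert, Set.mem_insert_iff, Finset.mem_coe,
        YoungDiagram.mem_cells] at hx ⊢
      rcases hx with rfl | hx
      · obtain ⟨y1, y2⟩ := y
        obtain ⟨h1, h2⟩ := hyx
        simp only at h1 h2
        by_cases hcase : y1 = μ.colLen j ∧ y2 = j
        · left; exact Prod.ext hcase.1 hcase.2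
        · right
          rw [YoungDiagram.mem_iff_lt_colLen]
          rcases Nat.lt_or_ge y1 (μ.colLen j) with hlt | hge
          · calc y1 < μ.colLen j := hlt
              _ ≤ μ.colLen y2 := μ.colLen_anti y2 j h2
          · have hy1 : y1 = μ.colLen j := le_antisymm h1 hge
            have hy2 : y2 < j := by
              rcases Nat.lt_or_ge y2 j with h' | h'
              · exact h'
              · exact absurd ⟨hy1, le_antisymm h2 h'⟩ hcase
            have hj0 : j ≠ 0 := by omega
            rcases h with h | h
            · omega
            · calc y1 = μ.colLen j := hy1
                _ < μ.colLen (j-1) := h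
                _ ≤ μ.colLen y2 := μ.colLen_anti y2 (j-1) (by omega)
      · right
        have : y ∈ (↑μ.cells : Set (ℕ × ℕ)) :=
          μ.isLowerSet hyx (by simpa using hx)
        simpa using this
    exact ⟨⟨insert (μ.colLen j, j) μ.cells, hlower⟩, rfl⟩

lemma cell_not_mem_self (μ : YoungDiagram) (j : ℕ) : (μ.colLen j, j) ∉ μ := by
  rw [YoungDiagram.mem_iff_lt_colLen]; omega

lemma growD_unique (h : addOK μ j) {lam : YoungDiagram}
    (hlam : lam.cells = insert (μ.colLen j, j) μ.cells) : growD μ j = lam := by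
  ext1; rw [growD_cells h, hlam]

end Foundations
section Chunk2

open Finset YoungDiagram

variable {μ ν lam : YoungDiagram} {j : ℕ}

lemma colLen_eq_of {X : YoungDiagram} {j n : ℕ} (h : ∀ i, (i, j) ∈ X ↔ i < n) :
    X.colLen j = n := by
  have h1 := h (X.colLen j)
  have h2 := h n
  rw [YoungDiagram.mem_iff_lt_colLen] at h1 h2
  omega

lemma remOK_witness {μ : YoungDiagram} (h : lam.cells = insert (μ.colLen j, j) μ.cells) :
    μ.cells = lam.cells.erase (lam.colLen j - 1, j) ∧ μ.colLen j + 1 = lam.colLen j := by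
  have hnm : (μ.colLen j, j) ∉ μ.cells := by
    rw [YoungDiagram.mem_cells]; exact cell_not_mem_self μ j
  have hcl : lam.colLen j = μ.colLen j + 1 := by
    apply colLen_eq_of
    intro i
    rw [← YoungDiagram.mem_cells, h, Finset.mem_insert]
    constructor
    · rintro (hc | hc)
      · have := congrArg Prod.fst hc; simp at this; omega
      · rw [YoungDiagram.mem_cells, YoungDiagram.mem_iff_lt_colLen] at hc; omega
    · intro hi
      rcases Nat.lt_or_ge i (μ.colLen j) with h' | h'
      · right; rw [YoungDiagram.mem_cells, YoungDiagram.mem_iff_lt_colLen]; exact h'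
      · left; have : i = μ.colLen j := by omega
        rw [this]
  refine ⟨?_, by omega⟩
  have : lam.colLen j - 1 = μ.colLen j := by omega
  rw [this, h, Finset.erase_insert hnm]

lemma remOK_iff : remOK lam j ↔ lam.colLen (j + 1) < lam.colLen j := by
  constructor
  · rintro ⟨μ, hμ⟩
    obtain ⟨hcells, hcl⟩ := remOK_witness hμ
    have h1 : lam.colLen (j+1) = μ.colLen (j+1) := by
      apply colLen_eq_of
      intro i
      rw [← YoungDiagram.mem_cells, hμ, Finset.mem_insert]
      constructor
      · rintro (hc | hc)
        · exfalso; have := congrArg Prod.snd hc; simp at this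
        · rw [YoungDiagram.mem_cells, YoungDiagram.mem_iff_lt_colLen] at hc; exact hc
      · intro hi; right
        rw [YoungDiagram.mem_cells, YoungDiagram.mem_iff_lt_colLen]; exact hi
    have h2 : μ.colLen (j+1) ≤ μ.colLen j := μ.colLen_anti j (j+1) (by omega)
    omega
  · intro hlt
    set c : ℕ × ℕ := (lam.colLen j - 1, j) with hc
    have hcmem : c ∈ lam := by
      rw [hc, YoungDiagram.mem_iff_lt_colLen]; omega
    have hlower : IsLowerSet (↑(lam.cells.erase c) : Set (ℕ × ℕ)) := by
      intro x y hyx hx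
      simp only [Finset.coe_erase, Set.mem_diff, Finset.mem_coe,
        YoungDiagram.mem_cells, Set.mem_singleton_iff] at hx ⊢
      obtain ⟨hxl, hxc⟩ := hx
      refine ⟨lam.isLowerSet hyx hxl, ?_⟩
      rintro rfl
      obtain ⟨x1, x2⟩ := x
      obtain ⟨h1, h2⟩ := hyx
      simp only [hc, Prod.mk_le_mk] at h1 h2
      rw [YoungDiagram.mem_iff_lt_colLen] at hxl
      rcases Nat.lt_or_ge x2 (j+1) with h' | h'
      · have : x2 = j := by omega
        subst this
        apply hxc
        have : x1 = lam.colLen x2 - 1 := by omega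
        rw [hc, this]
      · have := lam.colLen_anti (j+1) x2 h'
        omega
    set μ' : YoungDiagram := ⟨lam.cells.erase c, hlower⟩ with hμ'
    have hclμ : μ'.colLen j = lam.colLen j - 1 := by
      apply colLen_eq_of
      intro i
      rw [← YoungDiagram.mem_cells]
      show (i, j) ∈ lam.cells.erase c ↔ _
      rw [Finset.mem_erase]
      constructor
      · rintro ⟨hne, hmem⟩
        rw [YoungDiagram.mem_cells, YoungDiagram.mem_iff_lt_colLen] at hmem
        rcases Nat.lt_or_ge i (lam.colLen j - 1) with h' | h'
        · exact h'
        · exfalso; apply hne; rw [hc]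
          have : i = lam.colLen j - 1 := by omega
          rw [this]
      · intro hi
        constructor
        · intro heq
          rw [hc] at heq
          have := congrArg Prod.fst heq; simp at this; omega
        · rw [YoungDiagram.mem_cells, YoungDiagram.mem_iff_lt_colLen]; omega
    refine ⟨μ', ?_⟩
    rw [hclμ]
    show lam.cells = insert (lam.colLen j - 1, j) (lam.cells.erase c)
    rw [← hc, Finset.insert_erase hcmem]

lemma remOK_shrink (h : remOK lam j) :
    lam.cells = insert ((shrinkD lam j).colLen j, j) (shrinkD lam j).cells := by
  rw [shrinkD, dif_pos h]; exact h.choose_spec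

lemma addOK_shrinkD (h : remOK lam j) : addOK (shrinkD lam j) j :=
  ⟨lam, remOK_shrink h⟩

lemma growD_shrinkD (h : remOK lam j) : growD (shrinkD lam j) j = lam :=
  growD_unique (addOK_shrinkD h) (remOK_shrink h)

lemma remOK_growD (h : addOK μ j) : remOK (growD μ j) j :=
  ⟨μ, growD_cells h⟩

lemma shrinkD_unique (h : remOK lam j) {μ : YoungDiagram}
    (hμ : lam.cells = insert (μ.colLen j, j) μ.cells) : shrinkD lam j = μ := by
  have h1 := remOK_witness (remOK_shrink h)
  have h2 := remOK_witness hμ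
  ext1
  rw [h1.1, h2.1]

lemma shrinkD_growD (h : addOK μ j) : shrinkD (growD μ j) j = μ :=
  shrinkD_unique (remOK_growD h) (growD_cells h)

lemma mem_growD (h : addOK μ j) {c : ℕ × ℕ} :
    c ∈ growD μ j ↔ c = (μ.colLen j, j) ∨ c ∈ μ := by
  rw [← YoungDiagram.mem_cells, growD_cells h, Finset.mem_insert, YoungDiagram.mem_cells]

lemma le_growD (h : addOK μ j) : μ ≤ growD μ j := by
  intro c hc
  exact (mem_growD h).mpr (Or.inr hc)

lemma growD_ne (h : addOK μ j) : growD μ j ≠ μ := by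
  intro heq
  have : (μ.colLen j, j) ∈ growD μ j := (mem_growD h).mpr (Or.inl rfl)
  rw [heq] at this
  exact cell_not_mem_self μ j this

lemma growD_colLen (h : addOK μ j) : (growD μ j).colLen j = μ.colLen j + 1 := by
  apply colLen_eq_of
  intro i
  rw [mem_growD h]
  constructor
  · rintro (hc | hc)
    · have := congrArg Prod.fst hc; simp at this; omega
    · rw [YoungDiagram.mem_iff_lt_colLen] at hc; omega
  · intro hi
    rcases Nat.lt_or_ge i (μ.colLen j) with h' | h'
    · right; rw [YoungDiagram.mem_iff_lt_colLen]; exact h'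
    · left; have : i = μ.colLen j := by omega
      rw [this]

lemma growD_colLen_ne (h : addOK μ j) {j' : ℕ} (hj' : j' ≠ j) :
    (growD μ j).colLen j' = μ.colLen j' := by
  apply colLen_eq_of
  intro i
  rw [mem_growD h]
  constructor
  · rintro (hc | hc)
    · exfalso; have := congrArg Prod.snd hc; simp at this; exact hj' this
    · rw [YoungDiagram.mem_iff_lt_colLen] at hc; exact hc
  · intro hi; right; rw [YoungDiagram.mem_iff_lt_colLen]; exact hi

lemma addOK_le_rowLen (h : addOK μ j) : j ≤ μ.rowLen 0 := by
  rcases addOK_iff.mp h with rfl | hlt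
  · omega
  · have h1 : 0 < μ.colLen (j - 1) := by omega
    have h2 : (0, j - 1) ∈ μ := by rw [YoungDiagram.mem_iff_lt_colLen]; exact h1
    rw [YoungDiagram.mem_iff_lt_rowLen] at h2
    omega

lemma remOK_lt_rowLen (h : remOK lam j) : j < lam.rowLen 0 := by
  rw [remOK_iff] at h
  have h2 : (0, j) ∈ lam := by rw [YoungDiagram.mem_iff_lt_colLen]; omega
  rw [YoungDiagram.mem_iff_lt_rowLen] at h2
  exact h2

/-- columns where a cell can be added -/
noncomputable def ACols (μ : YoungDiagram) : Finset ℕ :=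
  (Finset.range (μ.rowLen 0 + 1)).filter (addOK μ)

/-- columns whose bottom cell is removable -/
noncomputable def CCols (lam : YoungDiagram) : Finset ℕ :=
  (Finset.range (lam.rowLen 0 + 1)).filter (remOK lam)

lemma mem_ACols : j ∈ ACols μ ↔ addOK μ j := by
  rw [ACols, Finset.mem_filter, Finset.mem_range]
  exact ⟨fun h => h.2, fun h => ⟨by have := addOK_le_rowLen h; omega, h⟩⟩

lemma mem_CCols : j ∈ CCols lam ↔ remOK lam j := by
  rw [CCols, Finset.mem_filter, Finset.mem_range]
  exact ⟨fun h => h.2, fun h => ⟨by have := remOK_lt_rowLen h; omega, h⟩⟩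

lemma ACols_eq (μ : YoungDiagram) : ACols μ = insert 0 ((CCols μ).image (· + 1)) := by
  ext j
  rw [mem_ACols, Finset.mem_insert, Finset.mem_image]
  cases j with
  | zero => simp [addOK_iff]
  | succ k =>
    constructor
    · intro h
      right
      refine ⟨k, ?_, rfl⟩
      rw [mem_CCols, remOK_iff]
      rcases addOK_iff.mp h with h' | h'
      · omega
      · simpa using h'
    · rintro (h | ⟨k', hk', hkk⟩)
      · omega
      · have : k' = k := by omega
        subst this
        rw [mem_CCols, remOK_iff] at hk'
        rw [addOK_iff]
        right
        simpa using hk'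

lemma card_ACols (μ : YoungDiagram) : (ACols μ).card = (CCols μ).card + 1 := by
  rw [ACols_eq]
  rw [Finset.card_insert_of_notMem (by simp)]
  rw [Finset.card_image_of_injective _ (add_left_injective 1)]

lemma corners_eq (lam : YoungDiagram) :
    corners lam = (CCols lam).image (fun j => (lam.colLen j - 1, j)) := by
  ext c
  obtain ⟨a, b⟩ := c
  rw [corners, Finset.mem_filter, Finset.mem_image]
  constructor
  · rintro ⟨hmem, h1, h2⟩
    rw [YoungDiagram.mem_cells, YoungDiagram.mem_iff_lt_colLen] at hmem h1 h2
    simp only at hmem h1 h2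
    refine ⟨b, ?_, ?_⟩
    · rw [mem_CCols, remOK_iff]; omega
    · have : lam.colLen b - 1 = a := by omega
      rw [this]
  · rintro ⟨j, hj, heq⟩
    rw [mem_CCols, remOK_iff] at hj
    rw [Prod.mk.injEq] at heq
    obtain ⟨ha, hb⟩ := heq
    subst ha; subst hb
    refine ⟨?_, ?_, ?_⟩
    · rw [YoungDiagram.mem_cells, YoungDiagram.mem_iff_lt_colLen]; omega
    · rw [YoungDiagram.mem_cells, YoungDiagram.mem_iff_lt_colLen]; dsimp only; omega
    · rw [YoungDiagram.mem_cells, YoungDiagram.mem_iff_lt_colLen]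
      dsimp only
      have := lam.colLen_anti j (j+1) (by omega)
      omega

lemma numCorners_eq (lam : YoungDiagram) : numCorners lam = (CCols lam).card := by
  rw [numCorners, corners_eq]
  apply Finset.card_image_of_injOn
  intro x _ y _ hxy
  have := congrArg Prod.snd hxy
  simpa using this

end Chunk2
section Chunk3
set_option linter.unusedSectionVars false

open Finset YoungDiagram

variable {μ ν lam X : YoungDiagram} {j : ℕ}

/-- no two cells share a row or column -/
def Free (s : Finset (ℕ × ℕ)) : Prop :=
  ∀ c ∈ s, ∀ c' ∈ s, (c.1 = c'.1 ∨ c.2 = c'.2) → c = c'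

/-- `c` shares no row or column with any cell of `s` -/
def Perp (c : ℕ × ℕ) (s : Finset (ℕ × ℕ)) : Prop :=
  ∀ t ∈ s, t.1 ≠ c.1 ∧ t.2 ≠ c.2

lemma isRookStrip_iff : IsRookStrip ν lam ↔ ν ≤ lam ∧ Free (skewCells ν lam) :=
  Iff.rfl

lemma free_subset {s t : Finset (ℕ × ℕ)} (h : s ⊆ t) (hf : Free t) : Free s :=
  fun c hc c' hc' hcc => hf c (h hc) c' (h hc') hcc

lemma free_insert {c : ℕ × ℕ} {s : Finset (ℕ × ℕ)} (hc : Perp c s) (hf : Free s) :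
    Free (insert c s) := by
  intro x hx y hy hxy
  rw [Finset.mem_insert] at hx hy
  rcases hx with rfl | hx <;> rcases hy with rfl | hy
  · rfl
  · exact absurd hxy (by have := hc y hy; tauto)
  · exact absurd hxy (by have := hc x hx; tauto)
  · exact hf x hx y hy hxy

lemma free_insert_elim {c : ℕ × ℕ} {s : Finset (ℕ × ℕ)} (hc : c ∉ s)
    (hf : Free (insert c s)) : Free s ∧ Perp c s := by
  constructor
  · exact free_subset (Finset.subset_insert c s) hf
  · intro t ht
    constructor
    · intro h1
      have := hf t (Finset.mem_insert_of_mem ht) c (Finset.mem_insert_self c s) (Or.inl h1)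
      subst this; exact hc ht
    · intro h2
      have := hf t (Finset.mem_insert_of_mem ht) c (Finset.mem_insert_self c s) (Or.inr h2)
      subst this; exact hc ht

lemma mem_skewCells {c : ℕ × ℕ} : c ∈ skewCells ν lam ↔ c ∈ lam ∧ c ∉ ν := by
  rw [skewCells, Finset.mem_sdiff, YoungDiagram.mem_cells, YoungDiagram.mem_cells]

lemma skewCells_self (lam : YoungDiagram) : skewCells lam lam = ∅ := by
  rw [skewCells, Finset.sdiff_self]

lemma isRookStrip_self (lam : YoungDiagram) : IsRookStrip lam lam := by
  rw [isRookStrip_iff]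
  refine ⟨le_rfl, ?_⟩
  rw [skewCells_self]
  intro c hc; simp at hc

lemma skew_nonempty (hle : ν ≤ lam) (hne : ν ≠ lam) : (skewCells ν lam).Nonempty := by
  rw [Finset.nonempty_iff_ne_empty]
  intro h
  rw [skewCells, Finset.sdiff_eq_empty_iff_subset] at h
  apply hne
  ext1
  exact Finset.Subset.antisymm (YoungDiagram.cells_subset_iff.mpr hle) h

lemma skew_mono_right (h : lam ≤ X) : skewCells ν lam ⊆ skewCells ν X := by
  intro c hc
  rw [mem_skewCells] at hc ⊢
  exact ⟨h hc.1, hc.2⟩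

lemma skew_anti_left (h : μ ≤ ν) : skewCells ν lam ⊆ skewCells μ lam := by
  intro c hc
  rw [mem_skewCells] at hc ⊢
  exact ⟨hc.1, fun hm => hc.2 (h hm)⟩

section RookFacts

variable (hle : ν ≤ lam) (hf : Free (skewCells ν lam))

include hle hf

lemma rs_row {s : ℕ × ℕ} (hs : s ∈ skewCells ν lam) : s.1 = ν.colLen s.2 := by
  obtain ⟨a, b⟩ := s
  rw [mem_skewCells] at hs
  obtain ⟨hsl, hsn⟩ := hs
  rw [YoungDiagram.mem_iff_lt_colLen] at hsn
  simp only at hsn ⊢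
  have hub : ν.colLen b ≤ a := by omega
  rcases Nat.eq_zero_or_pos a with rfl | hapos
  · omega
  · have hmem : (a - 1, b) ∈ ν := by
      by_contra hc
      have hsk : (a - 1, b) ∈ skewCells ν lam := by
        rw [mem_skewCells]
        exact ⟨lam.up_left_mem (by omega) le_rfl hsl, hc⟩
      have := hf _ hsk _ (mem_skewCells.mpr ⟨hsl, by rw [YoungDiagram.mem_iff_lt_colLen]; omega⟩)
        (Or.inr rfl)
      have := congrArg Prod.fst this
      simp at this; omega
    rw [YoungDiagram.mem_iff_lt_colLen] at hmem
    omega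

lemma rs_addOK {s : ℕ × ℕ} (hs : s ∈ skewCells ν lam) : addOK ν s.2 := by
  have hrow := rs_row hle hf hs
  obtain ⟨a, b⟩ := s
  simp only at hrow
  rw [addOK_iff]
  dsimp only
  rcases Nat.eq_zero_or_pos b with rfl | hbpos
  · exact Or.inl rfl
  · right
    rw [mem_skewCells] at hs
    have hmem : (a, b - 1) ∈ lam := lam.up_left_mem le_rfl (by omega) hs.1
    have hν : (a, b - 1) ∈ ν := by
      by_contra hc
      have hsk : (a, b - 1) ∈ skewCells ν lam := mem_skewCells.mpr ⟨hmem, hc⟩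
      have := hf _ hsk _ (mem_skewCells.mpr hs) (Or.inl rfl)
      rw [Prod.mk.injEq] at this; omega
    rw [YoungDiagram.mem_iff_lt_colLen] at hν
    omega

lemma skew_snd_injOn : Set.InjOn Prod.snd (skewCells ν lam : Set (ℕ × ℕ)) := by
  intro x hx y hy hxy
  exact hf x (by simpa using hx) y (by simpa using hy) (Or.inr hxy)

lemma skew_card_image_snd :
    ((skewCells ν lam).image Prod.snd).card = (skewCells ν lam).card :=
  Finset.card_image_of_injOn (skew_snd_injOn hle hf)

lemma colLen_eq_of_no_skew (h : ∀ s ∈ skewCells ν lam, s.2 ≠ j) :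
    lam.colLen j = ν.colLen j := by
  refine le_antisymm ?_ (colLen_mono hle j)
  by_contra hc
  push_neg at hc
  have hmem : (ν.colLen j, j) ∈ lam := by rw [YoungDiagram.mem_iff_lt_colLen]; exact hc
  have hsk : (ν.colLen j, j) ∈ skewCells ν lam :=
    mem_skewCells.mpr ⟨hmem, cell_not_mem_self ν j⟩
  exact h _ hsk rfl

lemma skew_colLen {t : ℕ × ℕ} (ht : t ∈ skewCells ν lam) : lam.colLen t.2 = t.1 + 1 := by
  have hrow := rs_row hle hf ht
  obtain ⟨a, b⟩ := t
  simp only at hrow ⊢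
  rw [mem_skewCells] at ht
  apply colLen_eq_of
  intro i
  constructor
  · intro hi
    by_contra hc
    push_neg at hc
    have h1 : (a + 1, b) ∈ lam := lam.up_left_mem (by omega) le_rfl hi
    have h2 : (a + 1, b) ∉ ν := by
      rw [YoungDiagram.mem_iff_lt_colLen]; omega
    have := hf _ (mem_skewCells.mpr ⟨h1, h2⟩) _ (mem_skewCells.mpr ht) (Or.inr rfl)
    have := congrArg Prod.fst this
    simp at this
  · intro hi
    exact lam.up_left_mem (by omega) le_rfl ht.1

end RookFacts

lemma addOK_rows_ne {j j' : ℕ} (hj : addOK ν j) (hj' : addOK ν j') (hne : j ≠ j') :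
    ν.colLen j ≠ ν.colLen j' := by
  rcases Nat.lt_or_ge j j' with h | h
  · have h0 : j' ≠ 0 := by omega
    rcases addOK_iff.mp hj' with h' | h'
    · omega
    · have := ν.colLen_anti j (j' - 1) (by omega)
      omega
  · have hlt : j' < j := by omega
    have h0 : j ≠ 0 := by omega
    rcases addOK_iff.mp hj with h' | h'
    · omega
    · have := ν.colLen_anti j' (j - 1) (by omega)
      omega

end Chunk3
section Chunk4
set_option linter.unusedSectionVars false

open Finset YoungDiagram

variable {μ ν lam X : YoungDiagram} {j : ℕ}

lemma perp_no_col {c : ℕ × ℕ} {s : Finset (ℕ × ℕ)} (h : Perp c s) :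
    ∀ t ∈ s, t.2 ≠ c.2 := fun t ht => (h t ht).2

section K
variable (hle : ν ≤ lam) (hf : Free (skewCells ν lam))
include hle hf

lemma A_transfer :
    (ACols lam).filter (fun j => Perp (lam.colLen j, j) (skewCells ν lam)) =
    (ACols ν).filter (fun j => Perp (ν.colLen j, j) (skewCells ν lam)) := by
  ext j
  simp only [Finset.mem_filter, mem_ACols]
  constructor
  · rintro ⟨hA, hP⟩
    have hnone : ∀ t ∈ skewCells ν lam, t.2 ≠ j := fun t ht => (hP t ht).2
    have hcl : lam.colLen j = ν.colLen j := colLen_eq_of_no_skew hle hf hnone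
    refine ⟨?_, by rwa [← hcl]⟩
    rcases addOK_iff.mp hA with rfl | hlt
    · exact addOK_iff.mpr (Or.inl rfl)
    · refine addOK_iff.mpr (Or.inr ?_)
      by_contra hc
      push_neg at hc
      have heq : ν.colLen (j - 1) = ν.colLen j := by
        have := ν.colLen_anti (j-1) j (by omega)
        omega
      have hmem : (ν.colLen (j-1), j-1) ∈ lam := by
        rw [YoungDiagram.mem_iff_lt_colLen]
        omega
      have hsk : (ν.colLen (j-1), j-1) ∈ skewCells ν lam :=
        mem_skewCells.mpr ⟨hmem, cell_not_mem_self ν (j-1)⟩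
      have := (hP _ hsk).1
      simp only at this
      omega
  · rintro ⟨hA, hP⟩
    have hnone : ∀ t ∈ skewCells ν lam, t.2 ≠ j := fun t ht => (hP t ht).2
    have hcl : lam.colLen j = ν.colLen j := colLen_eq_of_no_skew hle hf hnone
    refine ⟨?_, by rwa [hcl]⟩
    rcases addOK_iff.mp hA with rfl | hlt
    · exact addOK_iff.mpr (Or.inl rfl)
    · refine addOK_iff.mpr (Or.inr ?_)
      have := colLen_mono hle (j - 1)
      omega

lemma A_perp_card :
    ((ACols ν).filter (fun j => Perp (ν.colLen j, j) (skewCells ν lam))).card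
      + (skewCells ν lam).card = (ACols ν).card := by
  have key : (ACols ν).filter (fun j => ¬ Perp (ν.colLen j, j) (skewCells ν lam))
      = (skewCells ν lam).image Prod.snd := by
    ext j
    simp only [Finset.mem_filter, mem_ACols, Finset.mem_image]
    constructor
    · rintro ⟨hA, hP⟩
      rw [Perp] at hP
      push_neg at hP
      obtain ⟨t, ht, himp⟩ := hP
      by_cases h2 : t.2 = j
      · exact ⟨t, ht, h2⟩
      · have h1 : t.1 = ν.colLen j := by
          by_contra hc
          exact h2 (himp hc)
        exfalso
        have hrow := rs_row hle hf ht
        have haddt := rs_addOK hle hf ht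
        exact addOK_rows_ne haddt hA h2 (by omega)
    · rintro ⟨t, ht, rfl⟩
      refine ⟨rs_addOK hle hf ht, fun hP => ?_⟩
      exact (hP t ht).2 rfl
  have := Finset.card_filter_add_card_filter_not (s := ACols ν)
    (p := fun j => Perp (ν.colLen j, j) (skewCells ν lam))
  rw [key, skew_card_image_snd hle hf] at this
  exact this

lemma C_decomp :
    (CCols lam).card = (skewCells ν lam).card +
      ((CCols ν).filter (fun j => Perp (ν.colLen j - 1, j) (skewCells ν lam))).card := by
  have hunion : CCols lam =
      ((skewCells ν lam).image Prod.snd) ∪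
      ((CCols ν).filter (fun j => Perp (ν.colLen j - 1, j) (skewCells ν lam))) := by
    ext j
    simp only [Finset.mem_union, Finset.mem_image, Finset.mem_filter, mem_CCols]
    constructor
    · intro hj
      by_cases hex : ∃ t ∈ skewCells ν lam, t.2 = j
      · left; exact hex
      · right
        push_neg at hex
        have hcl : lam.colLen j = ν.colLen j := colLen_eq_of_no_skew hle hf hex
        rw [remOK_iff] at hj
        have hj1 : ν.colLen (j+1) ≤ lam.colLen (j+1) := colLen_mono hle (j+1)
        refine ⟨remOK_iff.mpr (by omega), ?_⟩
        intro t ht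
        refine ⟨?_, hex t ht⟩
        intro hteq
        have hrow := rs_row hle hf ht
        rcases lt_trichotomy t.2 j with h' | h' | h'
        · have := ν.colLen_anti t.2 j (by omega)
          omega
        · exact hex t ht h'
        · have htlam : t.1 < lam.colLen t.2 := by
            rw [← YoungDiagram.mem_iff_lt_colLen]
            exact (mem_skewCells.mp ht).1
          have := lam.colLen_anti (j+1) t.2 (by omega)
          omega
    · rintro (⟨t, ht, rfl⟩ | ⟨hC, hP⟩)
      · rw [remOK_iff]
        have hcl := skew_colLen hle hf ht
        have hnotmem : (t.1, t.2 + 1) ∉ lam := by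
          intro hmem
          by_cases hν : (t.1, t.2 + 1) ∈ ν
          · have : (t.1, t.2) ∈ ν := ν.up_left_mem le_rfl (by omega) hν
            exact (mem_skewCells.mp ht).2 (by
              have : ((t.1, t.2) : ℕ × ℕ) = t := by ext <;> rfl
              rwa [this] at *)
          · have hsk : (t.1, t.2 + 1) ∈ skewCells ν lam := mem_skewCells.mpr ⟨hmem, hν⟩
            have := hf _ hsk _ ht (Or.inl rfl)
            have := congrArg Prod.snd this
            simp only at this
            omega
        rw [YoungDiagram.mem_iff_lt_colLen] at hnotmem
        simp only [not_lt] at hnotmem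
        omega
      · have hnone : ∀ t ∈ skewCells ν lam, t.2 ≠ j := fun t ht => (hP t ht).2
        have hcl : lam.colLen j = ν.colLen j := colLen_eq_of_no_skew hle hf hnone
        rw [remOK_iff] at hC ⊢
        by_cases hex : ∃ t ∈ skewCells ν lam, t.2 = j + 1
        · obtain ⟨t, ht, ht2⟩ := hex
          have h1 : lam.colLen (j+1) = t.1 + 1 := by
            have := skew_colLen hle hf ht
            rwa [ht2] at this
          have h2 : t.1 = ν.colLen (j+1) := by
            have := rs_row hle hf ht
            rwa [ht2] at this
          have h3 := (hP t ht).1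
          simp only at h3
          omega
        · push_neg at hex
          have : lam.colLen (j+1) = ν.colLen (j+1) := colLen_eq_of_no_skew hle hf hex
          omega
  have hdisj : Disjoint ((skewCells ν lam).image Prod.snd)
      ((CCols ν).filter (fun j => Perp (ν.colLen j - 1, j) (skewCells ν lam))) := by
    rw [Finset.disjoint_left]
    rintro j hj1 hj2
    obtain ⟨t, ht, rfl⟩ := Finset.mem_image.mp hj1
    exact ((Finset.mem_filter.mp hj2).2 t ht).2 rfl
  rw [hunion, Finset.card_union_of_disjoint hdisj, skew_card_image_snd hle hf]

lemma caseRS_count (hne : ν ≠ lam) :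
    ((ACols lam).filter (fun j => Perp (lam.colLen j, j) (skewCells ν lam))).card
      + (CCols lam).card
    = 1 + ((CCols ν).filter (fun j => Perp (ν.colLen j - 1, j) (skewCells ν lam))).card
      + (CCols ν).card := by
  rw [A_transfer hle hf, C_decomp hle hf]
  have h1 := A_perp_card hle hf
  have h2 := card_ACols ν
  omega

end K
end Chunk4
section Chunk5
set_option linter.unusedSectionVars false

open Finset YoungDiagram

variable {μ ν lam : YoungDiagram} {j : ℕ}

/-- the set of `μ ⊊ lam` with `lam/μ` a rook strip -/
noncomputable def RSet (lam : YoungDiagram) : Finset YoungDiagram :=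
  ((subDiagrams lam).erase lam).filter (fun μ => IsRookStrip μ lam)

lemma mem_RSet : μ ∈ RSet lam ↔ μ ≠ lam ∧ μ ≤ lam ∧ IsRookStrip μ lam := by
  rw [RSet, Finset.mem_filter, Finset.mem_erase, mem_subDiagrams]
  tauto

lemma free_singleton (c : ℕ × ℕ) : Free ({c} : Finset (ℕ × ℕ)) := by
  intro x hx y hy _
  rw [Finset.mem_singleton] at hx hy
  rw [hx, hy]

lemma shrinkD_colLen (h : remOK lam j) : (shrinkD lam j).colLen j + 1 = lam.colLen j :=
  (remOK_witness (remOK_shrink h)).2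

lemma shrinkD_cells (h : remOK lam j) :
    (shrinkD lam j).cells = lam.cells.erase (lam.colLen j - 1, j) :=
  (remOK_witness (remOK_shrink h)).1

lemma mem_shrinkD (h : remOK lam j) {x : ℕ × ℕ} :
    x ∈ shrinkD lam j ↔ x ∈ lam ∧ x ≠ ((shrinkD lam j).colLen j, j) := by
  have hc := shrinkD_colLen h
  rw [← YoungDiagram.mem_cells, shrinkD_cells h, Finset.mem_erase, YoungDiagram.mem_cells]
  have : ((shrinkD lam j).colLen j, j) = ((lam.colLen j - 1 : ℕ), j) := by
    rw [Prod.mk.injEq]; omega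
  rw [this]
  tauto

lemma le_shrinkD (h : remOK lam j) : shrinkD lam j ≤ lam := by
  intro x hx
  exact ((mem_shrinkD h).mp hx).1

lemma shrink_cell_mem (h : remOK lam j) : ((shrinkD lam j).colLen j, j) ∈ lam := by
  rw [← YoungDiagram.mem_cells, remOK_shrink h]
  exact Finset.mem_insert_self _ _

lemma shrinkD_ne (h : remOK lam j) : shrinkD lam j ≠ lam := by
  intro heq
  have hmem : ((lam.colLen j - 1 : ℕ), j) ∈ lam.cells := by
    rw [YoungDiagram.mem_cells, YoungDiagram.mem_iff_lt_colLen]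
    have := remOK_iff.mp h; omega
  have hcard := Finset.card_erase_of_mem hmem
  have hc : (shrinkD lam j).cells = lam.cells := by rw [heq]
  rw [shrinkD_cells h] at hc
  have hcc := congrArg Finset.card hc
  rw [hcard] at hcc
  have hpos : 0 < lam.cells.card := Finset.card_pos.mpr ⟨_, hmem⟩
  omega

lemma skew_shrinkD (h : remOK lam j) :
    skewCells (shrinkD lam j) lam = {((shrinkD lam j).colLen j, j)} := by
  ext x
  rw [mem_skewCells, Finset.mem_singleton]
  constructor
  · rintro ⟨hxl, hxs⟩
    by_contra hc
    exact hxs ((mem_shrinkD h).mpr ⟨hxl, hc⟩)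
  · rintro rfl
    exact ⟨shrink_cell_mem h, cell_not_mem_self _ _⟩

lemma shrink_mem_RSet (h : remOK lam j) : shrinkD lam j ∈ RSet lam := by
  refine mem_RSet.mpr ⟨shrinkD_ne h, le_shrinkD h, le_shrinkD h, ?_⟩
  have hfs := free_singleton (((shrinkD lam j).colLen j, j))
  rwa [← skew_shrinkD h] at hfs

lemma cell_grow_not_mem (hν : ν ≤ lam) : (lam.colLen j, j) ∉ ν := by
  rw [YoungDiagram.mem_iff_lt_colLen]
  have := colLen_mono hν j
  omega

lemma skew_grow (hA : addOK lam j) (hν : ν ≤ lam) :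
    skewCells ν (growD lam j) = insert (lam.colLen j, j) (skewCells ν lam) := by
  ext x
  rw [mem_skewCells, Finset.mem_insert, mem_skewCells]
  constructor
  · rintro ⟨hxg, hxν⟩
    rcases (mem_growD hA).mp hxg with rfl | hxl
    · exact Or.inl rfl
    · exact Or.inr ⟨hxl, hxν⟩
  · rintro (rfl | ⟨hxl, hxν⟩)
    · exact ⟨(mem_growD hA).mpr (Or.inl rfl), cell_grow_not_mem hν⟩
    · exact ⟨(mem_growD hA).mpr (Or.inr hxl), hxν⟩

lemma grow_mem_RSet (hA : addOK lam j) : lam ∈ RSet (growD lam j) := by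
  refine mem_RSet.mpr ⟨(growD_ne hA).symm, le_growD hA, le_growD hA, ?_⟩
  have := skew_grow hA (le_refl lam)
  rw [skewCells_self, LawfulSingleton.insert_empty_eq] at this
  rw [show skewCells lam (growD lam j) = _ from this]
  exact free_singleton _

/-- Case ν = lam : the A-filter is everything -/
lemma A_filter_self (lam : YoungDiagram) :
    (ACols lam).filter (fun j => lam ∈ RSet (growD lam j)) = ACols lam := by
  apply Finset.filter_true_of_mem
  intro j hj
  exact grow_mem_RSet (mem_ACols.mp hj)

/-- Case ν = lam : the B-filter is everything -/
lemma B_filter_self (lam : YoungDiagram) :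
    (CCols lam).filter (fun j => shrinkD lam j ∈ RSet lam) = CCols lam := by
  apply Finset.filter_true_of_mem
  intro j hj
  exact shrink_mem_RSet (mem_CCols.mp hj)

/-- Case ¬RS : the A-filter is empty -/
lemma A_filter_empty (hle : ν ≤ lam) (hnf : ¬ IsRookStrip ν lam) :
    (ACols lam).filter (fun j => ν ∈ RSet (growD lam j)) = ∅ := by
  apply Finset.filter_false_of_mem
  intro j hj hm
  apply hnf
  obtain ⟨-, -, -, hfree⟩ := mem_RSet.mp hm
  exact ⟨hle, free_subset (skew_mono_right (le_growD (mem_ACols.mp hj))) hfree⟩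

/-- Case ¬RS : the B-filter is empty -/
lemma B_filter_empty (hle : ν ≤ lam) (hnf : ¬ IsRookStrip ν lam) :
    (CCols ν).filter (fun j => shrinkD ν j ∈ RSet lam) = ∅ := by
  apply Finset.filter_false_of_mem
  intro j hj hm
  apply hnf
  obtain ⟨-, -, -, hfree⟩ := mem_RSet.mp hm
  exact ⟨hle, free_subset (skew_anti_left (le_shrinkD (mem_CCols.mp hj))) hfree⟩

/-- Case RS, ν < lam : A-filter as a Perp filter -/
lemma A_filter_rs (hle : ν ≤ lam) (hf : Free (skewCells ν lam)) :
    (ACols lam).filter (fun j => ν ∈ RSet (growD lam j)) =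
    (ACols lam).filter (fun j => Perp (lam.colLen j, j) (skewCells ν lam)) := by
  ext j
  simp only [Finset.mem_filter, mem_ACols]
  apply and_congr_right
  intro hA
  have hskew := skew_grow hA hle
  have hcellS : (lam.colLen j, j) ∉ skewCells ν lam := fun hc =>
    cell_not_mem_self lam j (mem_skewCells.mp hc).1
  constructor
  · intro hm
    obtain ⟨-, -, -, hfree⟩ := mem_RSet.mp hm
    rw [show skewCells ν (growD lam j) = _ from hskew] at hfree
    exact (free_insert_elim hcellS hfree).2
  · intro hP
    refine mem_RSet.mpr ⟨?_, hle.trans (le_growD hA), hle.trans (le_growD hA), ?_⟩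
    · intro heq
      have h1 : (lam.colLen j, j) ∈ growD lam j := (mem_growD hA).mpr (Or.inl rfl)
      rw [← heq] at h1
      exact cell_grow_not_mem hle h1
    · rw [show skewCells ν (growD lam j) = _ from hskew]
      exact free_insert hP hf

/-- Case RS, ν < lam : B-filter as a Perp filter -/
lemma B_filter_rs (hle : ν ≤ lam) (hf : Free (skewCells ν lam)) :
    (CCols ν).filter (fun j => shrinkD ν j ∈ RSet lam) =
    (CCols ν).filter (fun j => Perp (ν.colLen j - 1, j) (skewCells ν lam)) := by
  ext j
  simp only [Finset.mem_filter, mem_CCols]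
  apply and_congr_right
  intro hr
  have hc1 : (shrinkD ν j).colLen j = ν.colLen j - 1 := by
    have := shrinkD_colLen hr; omega
  have hc'ν : ((shrinkD ν j).colLen j, j) ∈ ν := by
    rw [← YoungDiagram.mem_cells, remOK_shrink hr]
    exact Finset.mem_insert_self _ _
  have hc'lam : ((shrinkD ν j).colLen j, j) ∈ lam := hle hc'ν
  have hskew : skewCells (shrinkD ν j) lam =
      insert ((shrinkD ν j).colLen j, j) (skewCells ν lam) := by
    ext x
    rw [mem_skewCells, Finset.mem_insert, mem_skewCells]
    constructor
    · rintro ⟨hxl, hxs⟩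
      by_cases hx : x ∈ ν
      · left
        by_contra hc
        exact hxs ((mem_shrinkD hr).mpr ⟨hx, hc⟩)
      · exact Or.inr ⟨hxl, hx⟩
    · rintro (rfl | ⟨hxl, hxν⟩)
      · exact ⟨hc'lam, cell_not_mem_self _ _⟩
      · exact ⟨hxl, fun hc => hxν ((mem_shrinkD hr).mp hc).1⟩
  have hcS : ((shrinkD ν j).colLen j, j) ∉ skewCells ν lam := fun hc =>
    (mem_skewCells.mp hc).2 hc'ν
  constructor
  · intro hm
    obtain ⟨-, -, -, hfree⟩ := mem_RSet.mp hm
    rw [show skewCells (shrinkD ν j) lam = _ from hskew] at hfree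
    have := (free_insert_elim hcS hfree).2
    rwa [hc1] at this
  · intro hP
    refine mem_RSet.mpr ⟨?_, (le_shrinkD hr).trans hle, (le_shrinkD hr).trans hle, ?_⟩
    · intro heq
      rw [← heq] at hc'lam
      exact cell_not_mem_self _ _ hc'lam
    · rw [show skewCells (shrinkD ν j) lam = _ from hskew]
      refine free_insert ?_ hf
      rwa [hc1]

/-- Case ¬(ν ≤ lam) : A-filter and B-filter coincide -/
lemma AB_filter_nle (hnle : ¬ ν ≤ lam) :
    (ACols lam).filter (fun j => ν ∈ RSet (growD lam j)) =
    (CCols ν).filter (fun j => shrinkD ν j ∈ RSet lam) := by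
  ext j
  simp only [Finset.mem_filter, mem_ACols, mem_CCols]
  constructor
  · rintro ⟨hA, hm⟩
    obtain ⟨hne, hleg, -, hfree⟩ := mem_RSet.mp hm
    have hcν : (lam.colLen j, j) ∈ ν := by
      by_contra hc
      apply hnle
      intro x hx
      rcases (mem_growD hA).mp (hleg hx) with heq | hxl
      · exact absurd (heq ▸ hx) hc
      · exact hxl
    have hcolν : ν.colLen j = lam.colLen j + 1 := by
      apply colLen_eq_of
      intro i
      constructor
      · intro hi
        rcases (mem_growD hA).mp (hleg hi) with heq | hxl
        · have := congrArg Prod.fst heq; simp only at this; omega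
        · rw [YoungDiagram.mem_iff_lt_colLen] at hxl; omega
      · intro hi
        exact ν.up_left_mem (by omega) le_rfl hcν
    have hr : remOK ν j := by
      rw [remOK_iff]
      have h1 : ν.colLen (j+1) ≤ (growD lam j).colLen (j+1) := colLen_mono hleg (j+1)
      have h2 : (growD lam j).colLen (j+1) = lam.colLen (j+1) :=
        growD_colLen_ne hA (by omega)
      have h3 := lam.colLen_anti j (j+1) (by omega)
      omega
    have hcells : (shrinkD ν j).cells = ν.cells.erase (lam.colLen j, j) := by
      rw [shrinkD_cells hr]
      congr 1
      rw [Prod.mk.injEq]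
      omega
    have hmemμ' : ∀ x : ℕ × ℕ, x ∈ shrinkD ν j ↔ x ∈ ν ∧ x ≠ (lam.colLen j, j) := by
      intro x
      rw [← YoungDiagram.mem_cells, hcells, Finset.mem_erase, YoungDiagram.mem_cells]
      tauto
    have hμle : shrinkD ν j ≤ lam := by
      intro x hx
      obtain ⟨hxν, hxc⟩ := (hmemμ' x).mp hx
      rcases (mem_growD hA).mp (hleg hxν) with heq | hxl
      · exact absurd heq hxc
      · exact hxl
    have hskeweq : skewCells (shrinkD ν j) lam = skewCells ν (growD lam j) := by
      ext x
      rw [mem_skewCells, mem_skewCells]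
      constructor
      · rintro ⟨hxl, hxμ⟩
        refine ⟨(mem_growD hA).mpr (Or.inr hxl), fun hxν => hxμ ?_⟩
        refine (hmemμ' x).mpr ⟨hxν, fun heq => ?_⟩
        rw [heq] at hxl
        exact cell_not_mem_self lam j hxl
      · rintro ⟨hxg, hxν⟩
        rcases (mem_growD hA).mp hxg with rfl | hxl
        · exact absurd hcν hxν
        · exact ⟨hxl, fun hc => hxν ((hmemμ' x).mp hc).1⟩
    refine ⟨hr, mem_RSet.mpr ⟨?_, hμle, hμle, ?_⟩⟩
    · intro heq
      obtain ⟨t, ht⟩ := skew_nonempty hleg hne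
      have : t ∈ skewCells (shrinkD ν j) lam := hskeweq ▸ ht
      rw [heq, skewCells_self] at this
      simp at this
    · rw [show skewCells (shrinkD ν j) lam = _ from hskeweq]
      exact hfree
  · rintro ⟨hr, hm⟩
    obtain ⟨hμne, hμle, -, hfree⟩ := mem_RSet.mp hm
    have hcells := remOK_shrink hr
    have hc'ν : ((shrinkD ν j).colLen j, j) ∈ ν := by
      rw [← YoungDiagram.mem_cells, hcells]
      exact Finset.mem_insert_self _ _
    have hmemν : ∀ x : ℕ × ℕ, x ∈ ν ↔ x = ((shrinkD ν j).colLen j, j) ∨ x ∈ shrinkD ν j := by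
      intro x
      rw [← YoungDiagram.mem_cells, hcells, Finset.mem_insert, YoungDiagram.mem_cells]
    have hc'lam : ((shrinkD ν j).colLen j, j) ∉ lam := by
      intro hc
      apply hnle
      intro x hx
      rcases (hmemν x).mp hx with rfl | hxμ
      · exact hc
      · exact hμle hxμ
    have hcol : lam.colLen j = (shrinkD ν j).colLen j := by
      have h1 := colLen_mono hμle j
      rcases Nat.lt_or_ge ((shrinkD ν j).colLen j) (lam.colLen j) with h' | h'
      · exact absurd (YoungDiagram.mem_iff_lt_colLen.mpr h') hc'lam
      · omega
    have hA : addOK lam j := by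
      rw [addOK_iff]
      rcases Nat.eq_zero_or_pos j with rfl | hj
      · exact Or.inl rfl
      · right
        have hup : ((shrinkD ν j).colLen j, j - 1) ∈ ν :=
          ν.up_left_mem le_rfl (by omega) hc'ν
        rcases (hmemν _).mp hup with heq | hxμ
        · have := congrArg Prod.snd heq; simp only at this; omega
        · rw [YoungDiagram.mem_iff_lt_colLen] at hxμ
          have h2 := colLen_mono hμle (j - 1)
          omega
    have hgcells : (growD lam j).cells = insert ((shrinkD ν j).colLen j, j) lam.cells := by
      rw [growD_cells hA, hcol]
    have hmemg : ∀ x : ℕ × ℕ, x ∈ growD lam j ↔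
        x = ((shrinkD ν j).colLen j, j) ∨ x ∈ lam := by
      intro x
      rw [← YoungDiagram.mem_cells, hgcells, Finset.mem_insert, YoungDiagram.mem_cells]
    have hνle : ν ≤ growD lam j := by
      intro x hx
      rcases (hmemν x).mp hx with rfl | hxμ
      · exact (hmemg _).mpr (Or.inl rfl)
      · exact (hmemg x).mpr (Or.inr (hμle hxμ))
    have hskeweq : skewCells ν (growD lam j) = skewCells (shrinkD ν j) lam := by
      ext x
      rw [mem_skewCells, mem_skewCells]
      constructor
      · rintro ⟨hxg, hxν⟩
        rcases (hmemg x).mp hxg with rfl | hxl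
        · exact absurd hc'ν hxν
        · exact ⟨hxl, fun hc => hxν ((hmemν x).mpr (Or.inr hc))⟩
      · rintro ⟨hxl, hxμ⟩
        refine ⟨(hmemg x).mpr (Or.inr hxl), fun hxν => ?_⟩
        rcases (hmemν x).mp hxν with rfl | hxm
        · exact hc'lam hxl
        · exact hxμ hxm
    refine ⟨hA, mem_RSet.mpr ⟨?_, hνle, hνle, ?_⟩⟩
    · intro heq
      obtain ⟨t, ht⟩ := skew_nonempty hμle hμne
      have h1 : t ∈ skewCells ν (growD lam j) := hskeweq ▸ ht
      rw [← heq, skewCells_self] at h1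
      simp at h1
    · rw [show skewCells ν (growD lam j) = _ from hskeweq]
      exact hfree

/-- The master counting identity. -/
lemma master_count (lam ν : YoungDiagram) :
    ((ACols lam).filter (fun j => ν ∈ RSet (growD lam j))).card
      + numCorners lam * (if ν ∈ RSet lam then 1 else 0)
    = (if ν = lam then 1 else 0) + (if ν ∈ RSet lam then 1 else 0)
      + ((CCols ν).filter (fun j => shrinkD ν j ∈ RSet lam)).card
      + numCorners ν * (if ν ∈ RSet lam then 1 else 0) := by
  by_cases hle : ν ≤ lam
  · by_cases heq : ν = lam
    · subst heq
      have he : ν ∉ RSet ν := fun h => (mem_RSet.mp h).1 rfl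
      rw [if_pos rfl, if_neg he, A_filter_self, B_filter_self, card_ACols]
      omega
    · by_cases hRS : IsRookStrip ν lam
      · have he : ν ∈ RSet lam := mem_RSet.mpr ⟨heq, hle, hRS⟩
        rw [if_neg heq, if_pos he]
        have hf : Free (skewCells ν lam) := hRS.2
        rw [A_filter_rs hle hf, B_filter_rs hle hf, numCorners_eq, numCorners_eq]
        have := caseRS_count hle hf heq
        omega
      · have he : ν ∉ RSet lam := fun h => hRS (mem_RSet.mp h).2.2
        rw [if_neg heq, if_neg he, A_filter_empty hle hRS, B_filter_empty hle hRS]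
        simp
  · have he : ν ∉ RSet lam := fun h => hle (mem_RSet.mp h).2.1
    have heq : ν ≠ lam := fun h => hle (h ▸ le_rfl)
    rw [if_neg heq, if_neg he, AB_filter_nle hle]
    simp

end Chunk5
section Chunk6
set_option linter.unusedSectionVars false

open Finset YoungDiagram

variable {R : Type*} [CommRing R] {μ ν lam : YoungDiagram} {j : ℕ}

lemma lift_single (f : YoungDiagram → (YoungDiagram →₀ R)) (lam : YoungDiagram) :
    (Finsupp.lift (YoungDiagram →₀ R) R YoungDiagram f) (Finsupp.single lam 1) = f lam := by
  rw [Finsupp.lift_apply, Finsupp.sum_single_index (by simp), one_smul]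

lemma end_ext {F G : Module.End R (YoungDiagram →₀ R)}
    (h : ∀ lam, F (Finsupp.single lam 1) = G (Finsupp.single lam 1)) : F = G := by
  refine Finsupp.lhom_ext' fun a => LinearMap.ext_ring ?_
  simpa using h a

lemma schurU_single :
    schurU R j (Finsupp.single μ 1) =
      if h : addOK μ j then Finsupp.single (growD μ j) 1 else 0 := by
  rw [schurU, lift_single]
  refine dite_congr rfl (fun h => ?_) (fun h => rfl)
  rw [growD, dif_pos h]

lemma schurD_single :
    schurD R j (Finsupp.single lam 1) =
      if h : remOK lam j then Finsupp.single (shrinkD lam j) 1 else 0 := by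
  rw [schurD, lift_single]
  refine dite_congr rfl (fun h => ?_) (fun h => rfl)
  rw [shrinkD, dif_pos h]

lemma UD_single :
    (schurU R j * schurD R j) (Finsupp.single lam 1) =
      if remOK lam j then Finsupp.single lam 1 else 0 := by
  rw [Module.End.mul_apply, schurD_single]
  by_cases h : remOK lam j
  · rw [dif_pos h, if_pos h, schurU_single, dif_pos (addOK_shrinkD h), growD_shrinkD h]
  · rw [dif_neg h, if_neg h, map_zero]

lemma utilde_single :
    utilde R (-1) j (Finsupp.single lam 1) =
      (if h : addOK lam j then Finsupp.single (growD lam j) 1 else 0)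
        + (if remOK lam j then Finsupp.single lam 1 else 0) := by
  rw [utilde, LinearMap.sub_apply, LinearMap.smul_apply, UD_single, schurU_single]
  rw [neg_smul, one_smul, sub_neg_eq_add]

lemma bigU_single :
    bigU R (-1) (Finsupp.single lam 1) =
      (∑ j ∈ ACols lam, Finsupp.single (growD lam j) (1:R))
        + (numCorners lam : R) • Finsupp.single lam 1 := by
  rw [bigU, lift_single]
  have : ∀ j ∈ Finset.range (lam.rowLen 0 + 1),
      utilde R (-1) j (Finsupp.single lam 1) =
      (if addOK lam j then Finsupp.single (growD lam j) (1:R) else 0)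
        + (if remOK lam j then Finsupp.single lam 1 else 0) := by
    intro j _
    rw [utilde_single, dite_eq_ite]
  rw [Finset.sum_congr rfl this, Finset.sum_add_distrib]
  congr 1
  · rw [← Finset.sum_filter]
    rfl
  · rw [← Finset.sum_filter]
    have : (Finset.range (lam.rowLen 0 + 1)).filter (remOK lam) = CCols lam := rfl
    rw [this, Finset.sum_const, numCorners_eq, Nat.cast_smul_eq_nsmul]

lemma hatD_single :
    hatD R (Finsupp.single lam 1) = ∑ μ ∈ RSet lam, Finsupp.single μ (1:R) := by
  rw [hatD, lift_single]; rfl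

lemma bigDbar_single :
    bigDbar R (-1) (-1) (Finsupp.single lam 1) =
      ∑ μ ∈ (subDiagrams lam).erase lam,
        ((-1 : R) ^ (skewSize μ lam)) • Finsupp.single μ 1 := by
  rw [bigDbar, lift_single]
  apply Finset.sum_congr rfl
  intro μ _
  congr 1
  rw [← pow_add]
  congr 1
  have : skewCols μ lam ≤ skewSize μ lam := Finset.card_image_le
  omega

lemma sum_single_apply (T : Finset YoungDiagram) (ν : YoungDiagram) :
    (∑ μ ∈ T, Finsupp.single μ (1:R)) ν = if ν ∈ T then 1 else 0 := by
  rw [Finset.sum_apply']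
  have : ∀ μ ∈ T, Finsupp.single μ (1:R) ν = if μ = ν then 1 else 0 := by
    intro μ _
    rw [Finsupp.single_apply]
  rw [Finset.sum_congr rfl this, Finset.sum_ite_eq' T ν (fun _ => (1:R))]

end Chunk6
section Chunk7
set_option linter.unusedSectionVars false
open Finset YoungDiagram

variable {R : Type*} [CommRing R] {μ ν lam : YoungDiagram} {j : ℕ}

lemma cover_filter_eq (μ ν : YoungDiagram) :
    (ACols μ).filter (fun j => growD μ j = ν) =
    (CCols ν).filter (fun j => shrinkD ν j = μ) := by
  ext j
  simp only [Finset.mem_filter, mem_ACols, mem_CCols]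
  constructor
  · rintro ⟨h, rfl⟩
    exact ⟨remOK_growD h, shrinkD_growD h⟩
  · rintro ⟨h, rfl⟩
    exact ⟨addOK_shrinkD h, growD_shrinkD h⟩

lemma B_sum_eq (lam ν : YoungDiagram) :
    (∑ μ ∈ RSet lam, ((ACols μ).filter (fun j => growD μ j = ν)).card)
      = ((CCols ν).filter (fun j => shrinkD ν j ∈ RSet lam)).card := by
  have h1 : ∀ μ ∈ RSet lam, ((ACols μ).filter (fun j => growD μ j = ν)).card =
      (((CCols ν).filter (fun j => shrinkD ν j ∈ RSet lam)).filter
        (fun j => shrinkD ν j = μ)).card := by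
    intro μ hμ
    rw [cover_filter_eq]
    congr 1
    ext j
    simp only [Finset.mem_filter]
    constructor
    · rintro ⟨hj, rfl⟩; exact ⟨⟨hj, hμ⟩, rfl⟩
    · rintro ⟨⟨hj, _⟩, rfl⟩; exact ⟨hj, rfl⟩
  rw [Finset.sum_congr rfl h1]
  exact (Finset.card_eq_sum_card_fiberwise (fun x hx => (Finset.mem_filter.mp hx).2)).symm

lemma master_count' (lam ν : YoungDiagram) :
    ((ACols lam).filter (fun j => ν ∈ RSet (growD lam j))).card
      + numCorners lam * (if ν ∈ RSet lam then 1 else 0)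
    = (if ν = lam then 1 else 0) + (if ν ∈ RSet lam then 1 else 0)
      + (∑ μ ∈ RSet lam, ((ACols μ).filter (fun j => growD μ j = ν)).card)
      + (∑ μ ∈ RSet lam, numCorners μ * (if μ = ν then 1 else 0)) := by
  rw [B_sum_eq]
  have h2 : (∑ μ ∈ RSet lam, numCorners μ * (if μ = ν then 1 else 0))
      = numCorners ν * (if ν ∈ RSet lam then 1 else 0) := by
    have : ∀ μ ∈ RSet lam, numCorners μ * (if μ = ν then 1 else 0)
        = if μ = ν then numCorners μ else 0 := by
      intro μ _
      rw [mul_ite, mul_one, mul_zero]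
    rw [Finset.sum_congr rfl this, Finset.sum_ite_eq' (RSet lam) ν numCorners]
    rw [mul_ite, mul_one, mul_zero]
  rw [h2]
  exact master_count lam ν

lemma part1_single (lam : YoungDiagram) :
    hatD R (bigU R (-1) (Finsupp.single lam 1))
      - bigU R (-1) (hatD R (Finsupp.single lam 1))
    = Finsupp.single lam 1 + hatD R (Finsupp.single lam 1) := by
  have hL1 : hatD R (bigU R (-1) (Finsupp.single lam 1)) =
      (∑ j ∈ ACols lam, ∑ μ ∈ RSet (growD lam j), Finsupp.single μ (1:R))
        + (numCorners lam : R) • ∑ μ ∈ RSet lam, Finsupp.single μ 1 := by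
    rw [bigU_single, map_add, map_sum, map_smul, hatD_single]
    congr 1
    apply Finset.sum_congr rfl
    intro j _
    rw [hatD_single]
  have hL2 : bigU R (-1) (hatD R (Finsupp.single lam 1)) =
      ∑ μ ∈ RSet lam, ((∑ j ∈ ACols μ, Finsupp.single (growD μ j) (1:R))
        + (numCorners μ : R) • Finsupp.single μ 1) := by
    rw [hatD_single, map_sum]
    apply Finset.sum_congr rfl
    intro μ _
    rw [bigU_single]
  rw [hL1, hL2, hatD_single]
  ext ν
  simp only [Finsupp.coe_add, Finsupp.coe_sub, Pi.add_apply, Pi.sub_apply,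
    Finsupp.smul_apply, Finset.sum_apply', sum_single_apply, Finsupp.single_apply,
    Finsupp.add_apply, smul_eq_mul]
  have e1 : (∑ j ∈ ACols lam, ∑ x ∈ RSet (growD lam j), if x = ν then (1:R) else 0)
      = (((ACols lam).filter (fun j => ν ∈ RSet (growD lam j))).card : R) := by
    rw [← Finset.sum_boole]
    apply Finset.sum_congr rfl
    intro j _
    rw [Finset.sum_ite_eq' _ ν (fun _ => (1:R))]
  have e2 : (∑ x ∈ RSet lam, if x = ν then (1:R) else 0) = if ν ∈ RSet lam then (1:R) else 0 :=
    Finset.sum_ite_eq' _ ν _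
  have e3 : ∀ x ∈ RSet lam, ((∑ j ∈ ACols x, if growD x j = ν then (1:R) else 0)
      + (numCorners x : R) * (if x = ν then (1:R) else 0))
      = ((((ACols x).filter (fun j => growD x j = ν)).card : R)
        + (numCorners x : R) * (if x = ν then (1:R) else 0)) := by
    intro x _
    rw [Finset.sum_boole]
  rw [e1, e2, Finset.sum_congr rfl e3, Finset.sum_add_distrib]
  have e6 : (if lam = ν then (1:R) else 0) = if ν = lam then 1 else 0 := by
    rcases eq_or_ne lam ν with h | h
    · rw [if_pos h, if_pos h.symm]
    · rw [if_neg h, if_neg (Ne.symm h)]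
  rw [e6]
  have key := master_count' lam ν
  have keyR := congrArg (fun n : ℕ => (n : R)) key
  push_cast at keyR
  linear_combination keyR

theorem part1 (R : Type*) [CommRing R] :
    hatD R * bigU R (-1) - bigU R (-1) * hatD R = 1 + hatD R := by
  apply end_ext
  intro lam
  simp only [LinearMap.sub_apply, Module.End.mul_apply, LinearMap.add_apply,
    Module.End.one_apply]
  exact part1_single lam

end Chunk7
section Chunk8
set_option linter.unusedSectionVars false
open Finset YoungDiagram

variable {R : Type*} [CommRing R] {μ ν lam : YoungDiagram} {j : ℕ}

lemma card_lt_of_mem_erase_sub (h : ν ∈ (subDiagrams lam).erase lam) :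
    ν.cells.card < lam.cells.card := by
  rw [Finset.mem_erase, mem_subDiagrams] at h
  apply Finset.card_lt_card
  rw [Finset.ssubset_iff_subset_ne]
  refine ⟨YoungDiagram.cells_subset_iff.mpr h.2, fun hc => h.1 (by ext1; exact hc)⟩

lemma bigDbar_single_support (c : R) :
    ((bigDbar R (-1) (-1)) (Finsupp.single lam c)).support ⊆
      (subDiagrams lam).erase lam := by
  have h1 : (Finsupp.single lam c : YoungDiagram →₀ R) = c • Finsupp.single lam 1 := by
    rw [Finsupp.smul_single', mul_one]
  rw [h1, map_smul]
  refine subset_trans (Finsupp.support_smul) ?_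
  rw [bigDbar_single]
  refine subset_trans Finsupp.support_finset_sum ?_
  intro x hx
  rw [Finset.mem_biUnion] at hx
  obtain ⟨ν, hν, hxν⟩ := hx
  have := subset_trans Finsupp.support_smul Finsupp.support_single_subset hxν
  rw [Finset.mem_singleton] at this
  rwa [this]

lemma bigDbar_apply_support (x : YoungDiagram →₀ R) :
    ∀ μ ∈ ((bigDbar R (-1) (-1)) x).support, ∃ ν ∈ x.support, μ.cells.card < ν.cells.card := by
  intro μ hμ
  have hx : (bigDbar R (-1) (-1)) x =
      ∑ ν ∈ x.support, (bigDbar R (-1) (-1)) (Finsupp.single ν (x ν)) := by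
    conv_lhs => rw [← Finsupp.sum_single x]
    rw [Finsupp.sum, map_sum]
  rw [hx] at hμ
  have := Finsupp.support_finset_sum hμ
  rw [Finset.mem_biUnion] at this
  obtain ⟨ν, hν, hμν⟩ := this
  exact ⟨ν, hν, card_lt_of_mem_erase_sub (bigDbar_single_support (x ν) hμν)⟩

lemma D_pow_vanish : ∀ (m : ℕ) (x : YoungDiagram →₀ R),
    (∀ μ ∈ x.support, μ.cells.card ≤ m) →
    ((bigDbar R (-1) (-1)) ^ (m + 1)) x = 0 := by
  intro m
  induction m with
  | zero =>
    intro x hx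
    rw [pow_one]
    have hsupp : ((bigDbar R (-1) (-1)) x).support = ∅ := by
      rw [Finset.eq_empty_iff_forall_notMem]
      intro μ hμ
      obtain ⟨ν, hν, hlt⟩ := bigDbar_apply_support x μ hμ
      have := hx ν hν
      omega
    exact Finsupp.support_eq_empty.mp hsupp
  | succ m ih =>
    intro x hx
    have : ((bigDbar R (-1) (-1)) ^ (m + 1 + 1)) x =
        ((bigDbar R (-1) (-1)) ^ (m + 1)) ((bigDbar R (-1) (-1)) x) := by
      rw [pow_succ, Module.End.mul_apply]
    rw [this]
    apply ih
    intro μ hμ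
    obtain ⟨ν, hν, hlt⟩ := bigDbar_apply_support x μ hμ
    have := hx ν hν
    omega

lemma Dpow_single_zero {k : ℕ} (h : lam.cells.card < k) :
    ((bigDbar R (-1) (-1)) ^ k) (Finsupp.single lam (1:R)) = 0 := by
  have hk : k = (k - lam.cells.card - 1) + (lam.cells.card + 1) := by omega
  rw [hk, pow_add, Module.End.mul_apply]
  rw [D_pow_vanish lam.cells.card _ ?_, map_zero]
  intro μ hμ
  have := Finsupp.support_single_subset hμ
  rw [Finset.mem_singleton] at this
  rw [this]

/-- partial sums of the geometric series for `(1 + D̄)⁻¹` -/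
noncomputable def Winv (R : Type*) [CommRing R] (M : ℕ) :
    Module.End R (YoungDiagram →₀ R) :=
  ∑ k ∈ Finset.range M, ((-1:R) ^ k) • (bigDbar R (-1) (-1)) ^ k

/-- the inverse of `1 + D̄` -/
noncomputable def Vinv (R : Type*) [CommRing R] : Module.End R (YoungDiagram →₀ R) :=
  Finsupp.lift (YoungDiagram →₀ R) R YoungDiagram fun lam =>
    ∑ k ∈ Finset.range (lam.cells.card + 1),
      ((-1:R) ^ k) • ((bigDbar R (-1) (-1)) ^ k) (Finsupp.single lam 1)

lemma Winv_apply (M : ℕ) (x : YoungDiagram →₀ R) :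
    Winv R M x = ∑ k ∈ Finset.range M, ((-1:R) ^ k) • ((bigDbar R (-1) (-1)) ^ k) x := by
  rw [Winv, LinearMap.sum_apply]
  apply Finset.sum_congr rfl
  intro k _
  rw [LinearMap.smul_apply]

lemma Vinv_single (lam : YoungDiagram) :
    Vinv R (Finsupp.single lam 1) = Winv R (lam.cells.card + 1) (Finsupp.single lam 1) := by
  rw [Vinv, lift_single, Winv_apply]

lemma Winv_single_stable {M : ℕ} (h : lam.cells.card + 1 ≤ M) :
    Winv R M (Finsupp.single lam 1) = Vinv R (Finsupp.single lam 1) := by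
  rw [Vinv_single, Winv_apply, Winv_apply]
  apply (Finset.sum_subset (Finset.range_subset_range.mpr h) ?_).symm
  intro k _ hk
  rw [Finset.mem_range] at hk
  rw [Dpow_single_zero (by omega), smul_zero]

lemma Winv_succ (M : ℕ) :
    Winv R (M + 1) = Winv R M + ((-1:R) ^ M) • (bigDbar R (-1) (-1)) ^ M := by
  rw [Winv, Finset.sum_range_succ]; rfl

lemma Winv_mul (M : ℕ) :
    (1 + bigDbar R (-1) (-1)) * Winv R M
      = 1 - ((-1:R) ^ M) • (bigDbar R (-1) (-1)) ^ M := by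
  induction M with
  | zero =>
    rw [Winv, Finset.sum_range_zero, mul_zero, pow_zero, pow_zero, one_smul]
    exact (sub_self (1 : Module.End R (YoungDiagram →₀ R))).symm
  | succ M ih =>
    rw [Winv_succ, mul_add, ih]
    have h2 : (1 + bigDbar R (-1) (-1)) * (((-1:R) ^ M) • (bigDbar R (-1) (-1)) ^ M)
        = ((-1:R) ^ M) • (bigDbar R (-1) (-1)) ^ M
          + ((-1:R) ^ M) • (bigDbar R (-1) (-1)) ^ (M + 1) := by
      rw [mul_smul_comm, add_mul, one_mul, ← pow_succ', smul_add]
    rw [h2]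
    have h3 : ((-1:R) ^ (M + 1)) = -((-1:R) ^ M) := by ring
    have h4 := neg_smul ((-1:R) ^ M) ((bigDbar R (-1) (-1)) ^ (M + 1))
    rw [h3, h4, sub_neg_eq_add]
    abel

lemma Winv_comm (M : ℕ) :
    Winv R M * (1 + bigDbar R (-1) (-1)) = (1 + bigDbar R (-1) (-1)) * Winv R M := by
  rw [Winv, Finset.sum_mul, Finset.mul_sum]
  apply Finset.sum_congr rfl
  intro k _
  rw [smul_mul_assoc, mul_smul_comm]
  congr 1
  rw [mul_add, add_mul, mul_one, one_mul]
  congr 1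
  rw [← pow_succ, ← pow_succ']

lemma Vinv_eq_Winv {M : ℕ} {y : YoungDiagram →₀ R}
    (h : ∀ μ ∈ y.support, μ.cells.card < M) : Vinv R y = Winv R M y := by
  have hy : y = ∑ μ ∈ y.support, Finsupp.single μ (y μ) := by
    conv_lhs => rw [← Finsupp.sum_single y]
    rfl
  rw [hy, map_sum, map_sum]
  apply Finset.sum_congr rfl
  intro μ hμ
  have hs : (Finsupp.single μ (y μ) : YoungDiagram →₀ R) = (y μ) • Finsupp.single μ 1 := by
    rw [Finsupp.smul_single', mul_one]
  rw [hs, map_smul, map_smul, ← Winv_single_stable (M := M) (by have := h μ hμ; omega)]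

theorem part2 (R : Type*) [CommRing R] : IsUnit (1 + bigDbar R (-1) (-1)) := by
  have h1 : (1 + bigDbar R (-1) (-1)) * Vinv R = 1 := by
    apply end_ext
    intro lam
    rw [Module.End.mul_apply, Vinv_single, ← Module.End.mul_apply, Winv_mul]
    rw [LinearMap.sub_apply, LinearMap.smul_apply, Module.End.one_apply]
    rw [Dpow_single_zero (by omega), smul_zero, sub_zero]
  have h2 : Vinv R * (1 + bigDbar R (-1) (-1)) = 1 := by
    apply end_ext
    intro lam
    rw [Module.End.mul_apply]
    rw [Vinv_eq_Winv (M := lam.cells.card + 1) ?hsupp]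
    · rw [← Module.End.mul_apply, Winv_comm, Winv_mul]
      rw [LinearMap.sub_apply, LinearMap.smul_apply, Module.End.one_apply]
      rw [Dpow_single_zero (by omega), smul_zero, sub_zero]
    case hsupp =>
      intro μ hμ
      rw [LinearMap.add_apply, Module.End.one_apply] at hμ
      have := Finsupp.support_add hμ
      rw [Finset.mem_union] at this
      rcases this with h | h
      · have := Finsupp.support_single_subset h
        rw [Finset.mem_singleton] at this
        rw [this]; omega
      · have := card_lt_of_mem_erase_sub (bigDbar_single_support (1:R) h)
        omega
  exact ⟨⟨1 + bigDbar R (-1) (-1), Vinv R, h1, h2⟩, rfl⟩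

end Chunk8
section Chunk9
set_option linter.unusedSectionVars false
open Finset YoungDiagram

variable {R : Type*} [CommRing R] {μ ν lam : YoungDiagram} {j : ℕ}

noncomputable def eraseY (ν : YoungDiagram) (c : ℕ × ℕ) : YoungDiagram :=
  if h : IsLowerSet (↑(ν.cells.erase c) : Set (ℕ × ℕ)) then ⟨ν.cells.erase c, h⟩ else ν

lemma eraseY_eq {ν : YoungDiagram} {c : ℕ × ℕ} (X : YoungDiagram)
    (h : X.cells = ν.cells.erase c) : eraseY ν c = X := by
  have hls : IsLowerSet (↑(ν.cells.erase c) : Set (ℕ × ℕ)) := by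
    rw [← h]; exact X.isLowerSet
  rw [eraseY, dif_pos hls]
  ext1
  exact h.symm

lemma skewSize_self (lam : YoungDiagram) : skewSize lam lam = 0 := by
  rw [skewSize, skewCells_self, Finset.card_empty]

lemma pair_le {x y : ℕ × ℕ} (h : y ≤ x) : y.1 ≤ x.1 ∧ y.2 ≤ x.2 := h

lemma yd_mem_of_le_of_mem {ν : YoungDiagram} {x y : ℕ × ℕ} (hyx : y ≤ x) (hx : x ∈ ν) :
    y ∈ ν := by
  have h := pair_le hyx
  have := ν.up_left_mem h.1 h.2 (show (x.1, x.2) ∈ ν by rwa [Prod.mk.eta])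
  rwa [Prod.mk.eta] at this

lemma mob (hle : μ ≤ lam) (hne : μ ≠ lam) :
    ∑ ν ∈ (subDiagrams lam).filter (fun ν => μ ≤ ν ∧ IsRookStrip μ ν),
      ((-1:R) ^ (skewSize ν lam)) = 0 := by
  classical
  have hSne : (skewCells μ lam).Nonempty := skew_nonempty hle hne
  have hSimg : ((skewCells μ lam).image Prod.snd).Nonempty := hSne.image _
  set j₀ := ((skewCells μ lam).image Prod.snd).min' hSimg with hj₀def
  have hj₀min : ∀ s ∈ skewCells μ lam, j₀ ≤ s.2 := fun s hs =>
    Finset.min'_le _ _ (Finset.mem_image_of_mem _ hs)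
  obtain ⟨s₀, hs₀S, hs₀2⟩ : ∃ s ∈ skewCells μ lam, s.2 = j₀ := by
    have h := ((skewCells μ lam).image Prod.snd).min'_mem hSimg
    rw [Finset.mem_image] at h
    obtain ⟨s, hs, heq⟩ := h
    exact ⟨s, hs, heq⟩
  obtain ⟨a₀, b₀⟩ := s₀
  simp only at hs₀2
  subst hs₀2
  have hs₀lam : (a₀, j₀) ∈ lam := (mem_skewCells.mp hs₀S).1
  have hs₀1 : μ.colLen j₀ ≤ a₀ := by
    have h := (mem_skewCells.mp hs₀S).2
    rw [YoungDiagram.mem_iff_lt_colLen] at h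
    omega
  have hc₀lam : (μ.colLen j₀, j₀) ∈ lam := lam.up_left_mem hs₀1 le_rfl hs₀lam
  have hc₀μ : (μ.colLen j₀, j₀) ∉ μ := cell_not_mem_self μ j₀
  have haddμ : addOK μ j₀ := by
    rw [addOK_iff]
    rcases Nat.eq_zero_or_pos j₀ with h0 | hpos
    · exact Or.inl h0
    · right
      have hnosk : μ.colLen (j₀ - 1) ≥ lam.colLen (j₀ - 1) := by
        by_contra hcon
        push_neg at hcon
        have hmem : (μ.colLen (j₀-1), j₀-1) ∈ lam := YoungDiagram.mem_iff_lt_colLen.mpr hcon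
        have hsk : (μ.colLen (j₀-1), j₀-1) ∈ skewCells μ lam :=
          mem_skewCells.mpr ⟨hmem, cell_not_mem_self μ (j₀-1)⟩
        have := hj₀min _ hsk
        simp only at this
        omega
      have h1 : lam.colLen (j₀ - 1) ≥ lam.colLen j₀ := lam.colLen_anti _ _ (by omega)
      have h2 : μ.colLen j₀ < lam.colLen j₀ := YoungDiagram.mem_iff_lt_colLen.mp hc₀lam
      omega
  have memT : ∀ {ν : YoungDiagram},
      ν ∈ (subDiagrams lam).filter (fun ν => μ ≤ ν ∧ IsRookStrip μ ν) ↔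
      ν ≤ lam ∧ μ ≤ ν ∧ IsRookStrip μ ν := by
    intro ν
    rw [Finset.mem_filter, mem_subDiagrams]
  have hout : ∀ ν, ν ≤ lam → μ ≤ ν → IsRookStrip μ ν → (μ.colLen j₀, j₀) ∈ ν →
      (eraseY ν (μ.colLen j₀, j₀)).cells = ν.cells.erase (μ.colLen j₀, j₀) ∧
      ((eraseY ν (μ.colLen j₀, j₀)) ≤ lam ∧ μ ≤ eraseY ν (μ.colLen j₀, j₀) ∧
        IsRookStrip μ (eraseY ν (μ.colLen j₀, j₀))) ∧
      skewSize (eraseY ν (μ.colLen j₀, j₀)) lam = skewSize ν lam + 1 ∧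
      (μ.colLen j₀, j₀) ∉ eraseY ν (μ.colLen j₀, j₀) := by
    intro ν hνlam hμν hRS hc
    have hfree : Free (skewCells μ ν) := hRS.2
    have hlow : IsLowerSet (↑(ν.cells.erase (μ.colLen j₀, j₀)) : Set (ℕ × ℕ)) := by
      intro x y hyx hx
      simp only [Finset.coe_erase, Set.mem_diff, Finset.mem_coe, Set.mem_singleton_iff,
        YoungDiagram.mem_cells] at hx ⊢
      obtain ⟨hxν, hxc⟩ := hx
      refine ⟨yd_mem_of_le_of_mem hyx hxν, ?_⟩
      rintro rfl
      obtain ⟨a, b⟩ := x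
      obtain ⟨h1, h2⟩ := pair_le hyx
      simp only at h1 h2
      by_cases hxμ : (a, b) ∈ μ
      · exact hc₀μ (μ.up_left_mem h1 h2 hxμ)
      · have hxsk : (a, b) ∈ skewCells μ ν := mem_skewCells.mpr ⟨hxν, hxμ⟩
        have hrow : a = μ.colLen b := rs_row hμν hfree hxsk
        have hbgt : j₀ < b := by
          rcases Nat.lt_or_ge j₀ b with h | h
          · exact h
          · exfalso
            apply hxc
            have hb : b = j₀ := by omega
            subst hb
            rw [Prod.mk.injEq]
            exact ⟨hrow, rfl⟩
        have hcolb : μ.colLen b ≤ μ.colLen j₀ := μ.colLen_anti _ _ (le_of_lt hbgt)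
        have hwv : (a, b-1) ∈ ν :=
          yd_mem_of_le_of_mem (show ((a, b-1) : ℕ × ℕ) ≤ (a, b) by
            exact ⟨le_rfl, by omega⟩) hxν
        have hwμ : (a, b-1) ∉ μ := by
          rw [YoungDiagram.mem_iff_lt_colLen]
          have := μ.colLen_anti j₀ (b-1) (by omega)
          omega
        have hwsk : (a, b-1) ∈ skewCells μ ν := mem_skewCells.mpr ⟨hwv, hwμ⟩
        have := hfree _ hwsk _ hxsk (Or.inl rfl)
        rw [Prod.mk.injEq] at this
        omega
    have hXc : (eraseY ν (μ.colLen j₀, j₀)).cells = ν.cells.erase (μ.colLen j₀, j₀) :=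
      congrArg YoungDiagram.cells (eraseY_eq ⟨ν.cells.erase (μ.colLen j₀, j₀), hlow⟩ rfl)
    have hmemX : ∀ x : ℕ × ℕ, x ∈ eraseY ν (μ.colLen j₀, j₀) ↔
        x ∈ ν ∧ x ≠ (μ.colLen j₀, j₀) := by
      intro x
      rw [← YoungDiagram.mem_cells, hXc, Finset.mem_erase, YoungDiagram.mem_cells]
      tauto
    have hXlam : eraseY ν (μ.colLen j₀, j₀) ≤ lam := fun x hx => by
      exact hνlam (((hmemX x).mp hx).1)
    have hμX : μ ≤ eraseY ν (μ.colLen j₀, j₀) := fun x hx => by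
      refine (hmemX x).mpr ⟨hμν hx, fun heq => hc₀μ (heq ▸ hx)⟩
    have hskX : skewCells μ (eraseY ν (μ.colLen j₀, j₀)) =
        (skewCells μ ν).erase (μ.colLen j₀, j₀) := by
      ext x
      rw [mem_skewCells, Finset.mem_erase, mem_skewCells, hmemX]
      tauto
    have hskXlam : skewCells (eraseY ν (μ.colLen j₀, j₀)) lam =
        insert (μ.colLen j₀, j₀) (skewCells ν lam) := by
      ext x
      rw [mem_skewCells, Finset.mem_insert, mem_skewCells, hmemX]
      constructor
      · rintro ⟨hxl, hxn⟩
        by_cases hxν : x ∈ ν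
        · left
          by_contra hcon
          exact hxn ⟨hxν, hcon⟩
        · exact Or.inr ⟨hxl, hxν⟩
      · rintro (rfl | ⟨hxl, hxν⟩)
        · exact ⟨hc₀lam, fun hcon => hcon.2 rfl⟩
        · exact ⟨hxl, fun hcon => hxν hcon.1⟩
    refine ⟨hXc, ⟨hXlam, hμX, hμX, ?_⟩, ?_, ?_⟩
    · rw [show skewCells μ (eraseY ν (μ.colLen j₀, j₀)) = _ from hskX]
      exact free_subset (Finset.erase_subset _ _) hfree
    · rw [skewSize, skewSize, hskXlam, Finset.card_insert_of_notMem]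
      intro hcon
      exact (mem_skewCells.mp hcon).2 hc
    · intro hcon
      exact ((hmemX _).mp hcon).2 rfl
  have hin : ∀ ν, ν ≤ lam → μ ≤ ν → IsRookStrip μ ν → (μ.colLen j₀, j₀) ∉ ν →
      (ν ⊔ growD μ j₀).cells = insert (μ.colLen j₀, j₀) ν.cells ∧
      ((ν ⊔ growD μ j₀) ≤ lam ∧ μ ≤ (ν ⊔ growD μ j₀) ∧ IsRookStrip μ (ν ⊔ growD μ j₀)) ∧
      skewSize ν lam = skewSize (ν ⊔ growD μ j₀) lam + 1 ∧
      (μ.colLen j₀, j₀) ∈ ν ⊔ growD μ j₀ := by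
    intro ν hνlam hμν hRS hc
    have hfree : Free (skewCells μ ν) := hRS.2
    have hcells : (ν ⊔ growD μ j₀).cells = insert (μ.colLen j₀, j₀) ν.cells := by
      rw [YoungDiagram.cells_sup, growD_cells haddμ]
      ext x
      simp only [Finset.mem_union, Finset.mem_insert]
      constructor
      · rintro (hx | rfl | hx)
        · exact Or.inr hx
        · exact Or.inl rfl
        · exact Or.inr (YoungDiagram.cells_subset_iff.mpr hμν hx)
      · rintro (rfl | hx)
        · exact Or.inr (Or.inl rfl)
        · exact Or.inl hx
    have hmem' : ∀ x : ℕ × ℕ, x ∈ ν ⊔ growD μ j₀ ↔ x = (μ.colLen j₀, j₀) ∨ x ∈ ν := by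
      intro x
      rw [← YoungDiagram.mem_cells, hcells, Finset.mem_insert, YoungDiagram.mem_cells]
    have hle' : (ν ⊔ growD μ j₀) ≤ lam := fun x hx => by
      rcases (hmem' x).mp hx with rfl | hx
      · exact hc₀lam
      · exact hνlam hx
    have hμle' : μ ≤ ν ⊔ growD μ j₀ := hμν.trans le_sup_left
    have hskν' : skewCells μ (ν ⊔ growD μ j₀) = insert (μ.colLen j₀, j₀) (skewCells μ ν) := by
      ext x
      rw [mem_skewCells, Finset.mem_insert, mem_skewCells, hmem' x]
      constructor
      · rintro ⟨rfl | hx, hxμ⟩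
        · exact Or.inl rfl
        · exact Or.inr ⟨hx, hxμ⟩
      · rintro (rfl | ⟨hx, hxμ⟩)
        · exact ⟨Or.inl rfl, hc₀μ⟩
        · exact ⟨Or.inr hx, hxμ⟩
    have hPerp : Perp (μ.colLen j₀, j₀) (skewCells μ ν) := by
      intro t ht
      have htν : t ∈ ν := (mem_skewCells.mp ht).1
      have hrow : t.1 = μ.colLen t.2 := rs_row hμν hfree ht
      have htS : t ∈ skewCells μ lam := skew_mono_right hνlam ht
      have ht2 : t.2 ≠ j₀ := by
        intro heq
        apply hc
        have : t = (μ.colLen j₀, j₀) := by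
          rw [Prod.ext_iff]
          exact ⟨by rw [hrow, heq], heq⟩
        rwa [this] at htν
      have ht2' : j₀ < t.2 := by
        have := hj₀min t htS
        omega
      constructor
      · intro heq
        have hcolb : μ.colLen t.2 ≤ μ.colLen j₀ := μ.colLen_anti _ _ (le_of_lt ht2')
        have hwv : ((t.1, t.2 - 1) : ℕ × ℕ) ∈ ν :=
          yd_mem_of_le_of_mem (show ((t.1, t.2-1) : ℕ × ℕ) ≤ (t.1, t.2) by
            exact ⟨le_rfl, by omega⟩) (by rwa [Prod.mk.eta])
        have hwμ : ((t.1, t.2 - 1) : ℕ × ℕ) ∉ μ := by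
          rw [YoungDiagram.mem_iff_lt_colLen]
          have := μ.colLen_anti j₀ (t.2-1) (by omega)
          omega
        have hwsk : ((t.1, t.2 - 1) : ℕ × ℕ) ∈ skewCells μ ν := mem_skewCells.mpr ⟨hwv, hwμ⟩
        have h := hfree _ hwsk _ ht (Or.inl rfl)
        have h2 := congrArg Prod.snd h
        simp only at h2
        omega
      · exact ht2
    have hskν'lam : skewCells (ν ⊔ growD μ j₀) lam =
        (skewCells ν lam).erase (μ.colLen j₀, j₀) := by
      ext x
      rw [mem_skewCells, Finset.mem_erase, mem_skewCells]
      constructor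
      · rintro ⟨hxl, hxn⟩
        refine ⟨fun heq => hxn ((hmem' x).mpr (Or.inl heq)), hxl,
          fun hxν => hxn ((hmem' x).mpr (Or.inr hxν))⟩
      · rintro ⟨hne', hxl, hxν⟩
        refine ⟨hxl, fun hcon => ?_⟩
        rcases (hmem' x).mp hcon with heq | hx
        · exact hne' heq
        · exact hxν hx
    refine ⟨hcells, ⟨hle', hμle', hμle', ?_⟩, ?_, (hmem' _).mpr (Or.inl rfl)⟩
    · rw [show skewCells μ (ν ⊔ growD μ j₀) = _ from hskν']
      exact free_insert hPerp hfree
    · rw [skewSize, skewSize, hskν'lam, Finset.card_erase_of_mem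
        (mem_skewCells.mpr ⟨hc₀lam, hc⟩)]
      have hpos : 0 < (skewCells ν lam).card :=
        Finset.card_pos.mpr ⟨_, mem_skewCells.mpr ⟨hc₀lam, hc⟩⟩
      omega
  -- now the involution
  apply Finset.sum_involution
    (g := fun ν _ => if (μ.colLen j₀, j₀) ∈ ν then eraseY ν (μ.colLen j₀, j₀)
      else ν ⊔ growD μ j₀)
  · -- signs cancel
    intro ν hν
    obtain ⟨hνlam, hμν, hRS⟩ := memT.mp hν
    by_cases hc : (μ.colLen j₀, j₀) ∈ ν
    · rw [if_pos hc, (hout ν hνlam hμν hRS hc).2.2.1, pow_succ]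
      ring
    · rw [if_neg hc, (hin ν hνlam hμν hRS hc).2.2.1, pow_succ]
      ring
  · -- nontrivial
    intro ν hν _
    obtain ⟨hνlam, hμν, hRS⟩ := memT.mp hν
    by_cases hc : (μ.colLen j₀, j₀) ∈ ν
    · rw [if_pos hc]
      intro heq
      have hnot := (hout ν hνlam hμν hRS hc).2.2.2
      rw [heq] at hnot
      exact hnot hc
    · rw [if_neg hc]
      intro heq
      have hmm := (hin ν hνlam hμν hRS hc).2.2.2
      rw [heq] at hmm
      exact hc hmm
  · -- maps into the set
    intro ν hν
    obtain ⟨hνlam, hμν, hRS⟩ := memT.mp hν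
    by_cases hc : (μ.colLen j₀, j₀) ∈ ν
    · rw [if_pos hc]
      exact memT.mpr (hout ν hνlam hμν hRS hc).2.1
    · rw [if_neg hc]
      exact memT.mpr (hin ν hνlam hμν hRS hc).2.1
  · -- involution
    intro ν hν
    obtain ⟨hνlam, hμν, hRS⟩ := memT.mp hν
    by_cases hc : (μ.colLen j₀, j₀) ∈ ν
    · rw [if_pos hc]
      obtain ⟨hXc, ⟨hXlam, hμX, hXRS⟩, -, hXnot⟩ := hout ν hνlam hμν hRS hc
      rw [if_neg hXnot]
      ext1
      rw [(hin _ hXlam hμX hXRS hXnot).1, hXc, Finset.insert_erase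
        (by rwa [YoungDiagram.mem_cells])]
    · rw [if_neg hc]
      obtain ⟨hcells, ⟨hle', hμle', hRS'⟩, -, hmem⟩ := hin ν hνlam hμν hRS hc
      rw [if_pos hmem]
      apply eraseY_eq
      rw [hcells, Finset.erase_insert (by simpa using hc)]

end Chunk9
section Chunk10
set_option linter.unusedSectionVars false
open Finset YoungDiagram

variable {R : Type*} [CommRing R] {μ ν lam : YoungDiagram}

lemma hatD_Dbar_single (lam : YoungDiagram) :
    hatD R (Finsupp.single lam 1)
      + hatD R ((bigDbar R (-1) (-1)) (Finsupp.single lam 1))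
      + (bigDbar R (-1) (-1)) (Finsupp.single lam 1) = 0 := by
  rw [bigDbar_single, map_sum, hatD_single]
  have hmid : ∀ ν ∈ (subDiagrams lam).erase lam,
      hatD R (((-1:R) ^ skewSize ν lam) • Finsupp.single ν 1)
        = ((-1:R) ^ skewSize ν lam) • ∑ μ' ∈ RSet ν, Finsupp.single μ' (1:R) := by
    intro ν _
    rw [map_smul, hatD_single]
  rw [Finset.sum_congr rfl hmid]
  ext μ
  simp only [Finsupp.coe_add, Pi.add_apply, Finset.sum_apply', Finsupp.smul_apply,
    sum_single_apply, smul_eq_mul, Finsupp.coe_zero, Pi.zero_apply, Finsupp.single_apply]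
  have h3 : (∑ ν ∈ (subDiagrams lam).erase lam,
      (-1:R) ^ skewSize ν lam * if ν = μ then 1 else 0)
      = if μ ∈ (subDiagrams lam).erase lam then (-1:R) ^ skewSize μ lam else 0 := by
    rw [← Finset.sum_ite_eq' ((subDiagrams lam).erase lam) μ
      (fun ν => (-1:R) ^ skewSize ν lam)]
    apply Finset.sum_congr rfl
    intro ν _
    rw [mul_ite, mul_one, mul_zero]
  rw [h3]
  rw [Finset.sum_ite_eq' (RSet lam) μ (fun _ => (1:R))]
  have h1' : ∀ ν ∈ (subDiagrams lam).erase lam,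
      (-1:R) ^ skewSize ν lam * (∑ x ∈ RSet ν, if x = μ then (1:R) else 0)
      = (-1:R) ^ skewSize ν lam * (if μ ∈ RSet ν then 1 else 0) := by
    intro ν _
    rw [Finset.sum_ite_eq' (RSet ν) μ (fun _ => (1:R))]
  rw [Finset.sum_congr rfl h1']
  by_cases hcond : μ ≤ lam ∧ μ ≠ lam
  · obtain ⟨hle', hne'⟩ := hcond
    have h2 : (∑ ν ∈ (subDiagrams lam).erase lam,
        (-1:R) ^ skewSize ν lam * if μ ∈ RSet ν then 1 else 0)
        = ∑ ν ∈ ((subDiagrams lam).erase lam).filter (fun ν => μ ∈ RSet ν),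
            (-1:R) ^ skewSize ν lam := by
      rw [Finset.sum_filter]
      apply Finset.sum_congr rfl
      intro ν _
      rw [mul_ite, mul_one, mul_zero]
    rw [h2]
    have hμT : μ ∈ (subDiagrams lam).filter (fun ν => μ ≤ ν ∧ IsRookStrip μ ν) := by
      rw [Finset.mem_filter, mem_subDiagrams]
      exact ⟨hle', le_rfl, isRookStrip_self μ⟩
    have hsum := mob (R := R) hle' hne'
    rw [← Finset.add_sum_erase _ _ hμT] at hsum
    have h4 : μ ∈ (subDiagrams lam).erase lam := by
      rw [Finset.mem_erase, mem_subDiagrams]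
      exact ⟨hne', hle'⟩
    rw [if_pos h4]
    by_cases hRS : IsRookStrip μ lam
    · have hμR : μ ∈ RSet lam := mem_RSet.mpr ⟨hne', hle', hRS⟩
      rw [if_pos hμR]
      have hlamT : lam ∈ ((subDiagrams lam).filter
          (fun ν => μ ≤ ν ∧ IsRookStrip μ ν)).erase μ := by
        rw [Finset.mem_erase, Finset.mem_filter, mem_subDiagrams]
        exact ⟨Ne.symm hne', le_rfl, hle', hRS⟩
      rw [← Finset.add_sum_erase _ _ hlamT, skewSize_self, pow_zero] at hsum
      have hEq : ((((subDiagrams lam).filter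
          (fun ν => μ ≤ ν ∧ IsRookStrip μ ν)).erase μ).erase lam)
          = ((subDiagrams lam).erase lam).filter (fun ν => μ ∈ RSet ν) := by
        ext ν
        rw [Finset.mem_erase, Finset.mem_erase, Finset.mem_filter, mem_subDiagrams,
          Finset.mem_filter, Finset.mem_erase, mem_subDiagrams, mem_RSet]
        constructor
        · rintro ⟨h1', h2', h3', h4', h5'⟩
          exact ⟨⟨h1', h3'⟩, Ne.symm h2', h4', h5'⟩
        · rintro ⟨⟨h1', h3'⟩, h2', h4', h5'⟩
          exact ⟨h1', Ne.symm h2', h3', h4', h5'⟩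
      rw [hEq] at hsum
      linear_combination hsum
    · have hμR : μ ∉ RSet lam := fun h => hRS (mem_RSet.mp h).2.2
      rw [if_neg hμR]
      have hEq : (((subDiagrams lam).filter
          (fun ν => μ ≤ ν ∧ IsRookStrip μ ν)).erase μ)
          = ((subDiagrams lam).erase lam).filter (fun ν => μ ∈ RSet ν) := by
        ext ν
        rw [Finset.mem_erase, Finset.mem_filter, mem_subDiagrams,
          Finset.mem_filter, Finset.mem_erase, mem_subDiagrams, mem_RSet]
        constructor
        · rintro ⟨h2', h3', h4', h5'⟩
          refine ⟨⟨?_, h3'⟩, Ne.symm h2', h4', h5'⟩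
          rintro rfl
          exact hRS h5'
        · rintro ⟨⟨h1', h3'⟩, h2', h4', h5'⟩
          exact ⟨Ne.symm h2', h3', h4', h5'⟩
      rw [hEq] at hsum
      linear_combination hsum
  · push_neg at hcond
    have h1 : μ ∉ RSet lam := by
      intro h
      obtain ⟨hne', hle', -⟩ := mem_RSet.mp h
      exact hne' (hcond hle')
    have h2 : μ ∉ (subDiagrams lam).erase lam := by
      rw [Finset.mem_erase, mem_subDiagrams]
      rintro ⟨hne', hle'⟩
      exact hne' (hcond hle')
    rw [if_neg h1, if_neg h2]
    have hz : ∀ ν ∈ (subDiagrams lam).erase lam,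
        (-1:R) ^ skewSize ν lam * (if μ ∈ RSet ν then 1 else 0) = 0 := by
      intro ν hν
      rw [Finset.mem_erase, mem_subDiagrams] at hν
      have hμν : μ ∉ RSet ν := by
        intro hm
        obtain ⟨hne', hle', -⟩ := mem_RSet.mp hm
        have hμlam : μ ≤ lam := hle'.trans hν.2
        have heq := hcond hμlam
        subst heq
        exact hν.1 (le_antisymm hν.2 hle')
      rw [if_neg hμν, mul_zero]
    rw [Finset.sum_congr rfl hz, Finset.sum_const_zero]
    ring

lemma part3_eq (R : Type*) [CommRing R] :
    hatD R * (1 + bigDbar R (-1) (-1)) = -(bigDbar R (-1) (-1)) := by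
  apply end_ext
  intro lam
  rw [Module.End.mul_apply, LinearMap.add_apply, Module.End.one_apply, map_add,
    LinearMap.neg_apply]
  rw [eq_neg_iff_add_eq_zero]
  have h := hatD_Dbar_single (R := R) lam
  linear_combination (norm := abel) h

theorem part3 (R : Type*) [CommRing R] :
    hatD R = -(bigDbar R (-1) (-1)) * Ring.inverse (1 + bigDbar R (-1) (-1)) := by
  have hu := part2 R
  calc hatD R
      = hatD R * ((1 + bigDbar R (-1) (-1)) * Ring.inverse (1 + bigDbar R (-1) (-1))) := by
        rw [Ring.mul_inverse_cancel _ hu, mul_one]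
    _ = (hatD R * (1 + bigDbar R (-1) (-1))) * Ring.inverse (1 + bigDbar R (-1) (-1)) := by
        rw [mul_assoc]
    _ = -(bigDbar R (-1) (-1)) * Ring.inverse (1 + bigDbar R (-1) (-1)) := by
        rw [part3_eq]

end Chunk10


/-- The Möbius deformation `μ𝕐` of Young's lattice is a dual filtered graph satisfying
`D̂Ũ - ŨD̂ = 1 + D̂` (with `β = -1`); moreover `1 + D̄` is invertible (where `D̄` is the down
operator of the Cauchy deformation with `κ = β = -1`) and `D̂` is obtained from `D̄` via the
transform `D̂ = -D̄ (1 + D̄)⁻¹` (Theorem of Section 9 of the paper). -/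
theorem mobius_deformation_dual_filtered (R : Type*) [CommRing R] :
    (hatD R * bigU R (-1) - bigU R (-1) * hatD R = 1 + hatD R) ∧
    IsUnit (1 + bigDbar R (-1) (-1)) ∧
    hatD R = -(bigDbar R (-1) (-1)) * Ring.inverse (1 + bigDbar R (-1) (-1)) := by
  exact ⟨part1 R, part2 R, part3 R⟩
end
end

section
/- Let A be an associative unital ring and let u, d ∈ A be such that 1 + d is invertible and du − ud = −(1 + d). Then the element d̂ := −d(1 + d)^{-1} satisfies d̂u − ud̂ = 1 + d̂. -/
/-- Transform lemma (Lemma `trans` of the paper): in an associative unital ring, if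
`1 + d` is invertible and `[d, u] = -(1 + d)`, then `d̂ := -d(1+d)⁻¹` satisfies
`[d̂, u] = 1 + d̂`. -/
theorem commutator_transform {A : Type*} [Ring A] (u d : A)
    (hunit : IsUnit (1 + d)) (hcomm : d * u - u * d = -(1 + d)) :
    (-(d * Ring.inverse (1 + d))) * u - u * (-(d * Ring.inverse (1 + d)))
      = 1 + (-(d * Ring.inverse (1 + d))) := by
  set e := Ring.inverse (1 + d) with he
  have h1 : (1 + d) * e = 1 := Ring.mul_inverse_cancel _ hunit
  have h2 : e * (1 + d) = 1 := Ring.inverse_mul_cancel _ hunit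
  have hde : d * e = 1 - e := by
    have : (1 + d) * e - e = 1 - e := by rw [h1]
    rw [← this]; noncomm_ring
  have hud : u * (1 + d) = (1 + d) * u + (1 + d) := by
    have h3 : u * d - d * u = 1 + d := by rw [← neg_sub, hcomm, neg_neg]
    have := eq_add_of_sub_eq h3
    rw [mul_add, add_mul, mul_one, one_mul, this]; abel
  have heu : e * u = u * e + e := by
    calc e * u = e * u * ((1 + d) * e) := by rw [h1, mul_one]
    _ = e * (u * (1 + d)) * e := by noncomm_ring
    _ = e * ((1 + d) * u + (1 + d)) * e := by rw [hud]
    _ = (e * (1 + d)) * (u * e) + (e * (1 + d)) * e := by noncomm_ring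
    _ = u * e + e := by rw [h2, one_mul, one_mul]
  rw [hde]
  have key : -(1 - e) * u - u * (-(1 - e)) = e * u - u * e := by noncomm_ring
  rw [key, heu]; noncomm_ring
end

section
/- Normal ordering for the relation [D, U] = 1 + D: let A be an associative unital ring and U, D ∈ A with DU − UD = 1 + D. Then for all natural numbers m, n: D^n U^m = Σ_{i=0}^{m} Σ_{j=0}^{n} C(m, i) C(n, j) q_n(i, j) U^{m−i} D^{n−j}, where q_n(i, j) := Σ_{k=0}^{n} (−1)^{n−k} C(j, n−k) k^i ∈ ℤ (integer coefficients acting on A via the canonical map ℤ → A), and C denotes the usual binomial coefficient (zero when the lower index is negative or exceeds a nonnegative upper index). -/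
open Finset

private lemma choose_swap {n j k : ℕ} (hj : j ≤ n) (hk : k ≤ n) :
    n.choose k * k.choose (n - j) = n.choose j * j.choose (n - k) := by
  rcases lt_or_ge (k + j) n with hlt | hge
  · rw [Nat.choose_eq_zero_of_lt (show k < n - j by omega),
      Nat.choose_eq_zero_of_lt (show j < n - k by omega), mul_zero, mul_zero]
  · rw [Nat.choose_mul (by omega : n - j ≤ k)]
    have h1 : n.choose (n - j) = n.choose j := Nat.choose_symm hj
    have h2 : n - (n - j) = j := by omega
    have h3 : k - (n - j) = k + j - n := by omega
    have h4 : n - k = j - (k + j - n) := by omega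
    rw [h1, h2, h3, h4, Nat.choose_symm (by omega)]

section
variable {A : Type*} [Ring A]

private lemma mul_natCast' (a : A) (c : ℕ) : a * (c : A) = c • a := by
  rw [nsmul_eq_mul, (Nat.cast_commute c a).eq]

private lemma mul_intCast' (a : A) (z : ℤ) : a * (z : A) = z • a := by
  rw [zsmul_eq_mul, (Int.cast_commute z a).eq]

private lemma stepE (U D : A) (h : D * U - U * D = 1 + D) (n : ℕ) :
    (1 + D) ^ n * U = (U + (n : A)) * (1 + D) ^ n := by
  have hDU : D * U = 1 + D + U * D := by rw [← h]; abel
  induction n with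
  | zero => simp
  | succ n ih =>
    have hc : D * (n : A) = (n : A) * D := ((Nat.cast_commute n D).eq).symm
    have key : (1 + D) * (U + (n : A)) = (U + ((n : A) + 1)) * (1 + D) := by
      simp only [mul_add, add_mul, one_mul, mul_one, hDU, hc]
      abel
    calc (1 + D) ^ (n+1) * U = (1 + D) * ((1 + D) ^ n * U) := by
          rw [pow_succ', mul_assoc]
      _ = (1 + D) * ((U + (n : A)) * (1 + D) ^ n) := by rw [ih]
      _ = ((1 + D) * (U + (n : A))) * (1 + D) ^ n := by rw [mul_assoc]
      _ = ((U + ((n : A) + 1)) * (1 + D)) * (1 + D) ^ n := by rw [key]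
      _ = (U + ((n:ℕ)+1 : ℕ)) * (1 + D) ^ (n+1) := by rw [mul_assoc, ← pow_succ']; push_cast; ring_nf

private lemma stepEm (U D : A) (h : D * U - U * D = 1 + D) (m n : ℕ) :
    (1 + D) ^ n * U ^ m = (U + (n : A)) ^ m * (1 + D) ^ n := by
  induction m with
  | zero => simp
  | succ m ih =>
    calc (1 + D) ^ n * U ^ (m+1) = ((1 + D) ^ n * U ^ m) * U := by
          rw [pow_succ, mul_assoc]
      _ = (U + (n : A)) ^ m * ((1 + D) ^ n * U) := by rw [ih, mul_assoc]
      _ = (U + (n : A)) ^ m * ((U + (n : A)) * (1 + D) ^ n) := by rw [stepE U D h]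
      _ = (U + (n : A)) ^ (m+1) * (1 + D) ^ n := by rw [← mul_assoc, ← pow_succ]

end


/-- Normal ordering formula (Lemma `normord` of the paper) for the relation
`[D, U] = 1 + D`: in an associative unital ring,
`D^n U^m = Σ_{i,j} C(m,i) C(n,j) q_n(i,j) U^{m-i} D^{n-j}`, where
`q_n(i,j) = Σ_k (-1)^{n-k} C(j, n-k) k^i ∈ ℤ` acts via the canonical map `ℤ → A`. -/
theorem normal_ordering (A : Type*) [Ring A] (U D : A) (h : D * U - U * D = 1 + D)
    (m n : ℕ) :
    D ^ n * U ^ m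
      = ∑ i ∈ Finset.range (m + 1), ∑ j ∈ Finset.range (n + 1),
          (((m.choose i : ℤ) * (n.choose j : ℤ) *
              ∑ k ∈ Finset.range (n + 1),
                (-1 : ℤ) ^ (n - k) * (j.choose (n - k) : ℤ) * (k : ℤ) ^ i) •
            (U ^ (m - i) * D ^ (n - j))) := by
  -- expansion of D^n in powers of (1+D)
  have hD : D ^ n = ∑ k ∈ Finset.range (n+1),
      ((-1:ℤ)^(n-k) * (n.choose k : ℤ)) • (1+D)^k := by
    conv_lhs => rw [show D = (1+D) + (-1) by abel]
    rw [(Commute.neg_one_right (1+D)).add_pow]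
    refine Finset.sum_congr rfl fun k _ => ?_
    have hcast : ((-1:A))^(n-k) * ((n.choose k : ℕ) : A)
        = (((-1:ℤ)^(n-k) * (n.choose k : ℤ) : ℤ) : A) := by push_cast; ring
    rw [mul_assoc, hcast, mul_intCast' _ _]
  -- expansion of (U + k)^m
  have hU : ∀ k : ℕ, (U + (k:A)) ^ m
      = ∑ i ∈ Finset.range (m+1), ((m.choose i : ℤ) * (k:ℤ)^i) • U ^ (m-i) := by
    intro k
    rw [add_comm, (Nat.cast_commute k U).add_pow]
    refine Finset.sum_congr rfl fun i _ => ?_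
    have hcast : ((k:A))^i = (((k:ℤ)^i : ℤ) : A) := by push_cast; ring
    rw [mul_natCast', hcast, ← zsmul_eq_mul, ← natCast_zsmul, smul_smul]
  -- expansion of (1 + D)^k as sum over range (n+1), reflected
  have hE : ∀ k ∈ Finset.range (n+1), (1 + (D:A)) ^ k
      = ∑ j ∈ Finset.range (n+1), ((k.choose (n-j) : ℤ)) • D ^ (n-j) := by
    intro k hk
    have hk' : k ≤ n := by simpa [Nat.lt_succ_iff] using hk
    have step1 : (1 + (D:A)) ^ k
        = ∑ t ∈ Finset.range (k+1), ((k.choose t : ℤ)) • D ^ t := by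
      rw [add_comm, (Commute.one_right D).add_pow]
      refine Finset.sum_congr rfl fun t _ => ?_
      rw [one_pow, mul_one, mul_natCast', ← natCast_zsmul]
    rw [step1]
    rw [Finset.sum_subset (Finset.range_subset_range.mpr (Nat.succ_le_succ hk'))
      (fun t _ ht => by
        have : k < t := by simp at ht; omega
        rw [Nat.choose_eq_zero_of_lt this]; simp)]
    exact (Finset.sum_range_reflect
      (fun t => ((k.choose t : ℤ)) • D ^ t) (n+1)).symm
  -- now assemble
  calc D ^ n * U ^ m
      = ∑ k ∈ Finset.range (n+1),
          ((-1:ℤ)^(n-k) * (n.choose k : ℤ)) • ((1+D)^k * U ^ m) := by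
        rw [hD, Finset.sum_mul]
        exact Finset.sum_congr rfl fun k _ => smul_mul_assoc _ _ _
    _ = ∑ k ∈ Finset.range (n+1),
          ((-1:ℤ)^(n-k) * (n.choose k : ℤ)) • ((U + (k:A))^m * (1+D)^k) := by
        exact Finset.sum_congr rfl fun k _ => by rw [stepEm U D h]
    _ = ∑ k ∈ Finset.range (n+1), ∑ i ∈ Finset.range (m+1), ∑ j ∈ Finset.range (n+1),
          (((-1:ℤ)^(n-k) * (n.choose k : ℤ)) * (((m.choose i : ℤ) * (k:ℤ)^i)
            * (k.choose (n-j) : ℤ))) • (U ^ (m-i) * D ^ (n-j)) := by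
        refine Finset.sum_congr rfl fun k hk => ?_
        rw [hU k, hE k hk, Finset.sum_mul, Finset.smul_sum]
        refine Finset.sum_congr rfl fun i _ => ?_
        rw [Finset.mul_sum, Finset.smul_sum]
        refine Finset.sum_congr rfl fun j _ => ?_
        rw [smul_mul_assoc, mul_smul_comm, smul_smul, smul_smul, mul_assoc]
    _ = ∑ i ∈ Finset.range (m+1), ∑ j ∈ Finset.range (n+1), ∑ k ∈ Finset.range (n+1),
          (((-1:ℤ)^(n-k) * (n.choose k : ℤ)) * (((m.choose i : ℤ) * (k:ℤ)^i)
            * (k.choose (n-j) : ℤ))) • (U ^ (m-i) * D ^ (n-j)) := by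
        rw [Finset.sum_comm]
        exact Finset.sum_congr rfl fun i _ => Finset.sum_comm
    _ = _ := by
        refine Finset.sum_congr rfl fun i _ => Finset.sum_congr rfl fun j hj => ?_
        rw [Finset.mul_sum, Finset.sum_smul]
        refine Finset.sum_congr rfl fun k hk => ?_
        congr 1
        have hj' : j ≤ n := by simpa [Nat.lt_succ_iff] using hj
        have hk' : k ≤ n := by simpa [Nat.lt_succ_iff] using hk
        have hz : (n.choose k : ℤ) * (k.choose (n-j) : ℤ)
            = (n.choose j : ℤ) * (j.choose (n-k) : ℤ) := by
          exact_mod_cast congrArg (Nat.cast : ℕ → ℤ) (choose_swap hj' hk')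
        linear_combination ((-1:ℤ)^(n-k) * (m.choose i : ℤ) * (k:ℤ)^i) * hz
end
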